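/- arXiv:2307.10300 — 9 statements merged into one kernel-verified Lean document; each statement's English description precedes it below -/
import Mathlib

section
/- The shuffle product on the tensor module T(V) = ⨁_{n∈ℕ} V^{⊗n} of an R-module V, defined on homogeneous tensors by μ_sh((v_1⊗…⊗v_p) ⊗ (v_{p+1}⊗…⊗v_{p+q})) = Σ_{σ ∈ Sh(p,q)} v_{σ^{−1}(1)} ⊗ … ⊗ v_{σ^{−1}(p+q)} and extended bilinearly, is associative and commutative, with the empty tensor 1 ∈ R = V^{⊗0} as a two-sided unit; thus (T(V), μ_sh) is a commutative associative unital R-algebra. -/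
open scoped DirectSum

/-- The tensor module `T(V) = ⨁_{n∈ℕ} V^{⊗n}`. -/
abbrev TensorModule (R V : Type) [CommRing R] [AddCommGroup V] [Module R V] :=
  ⨁ n : ℕ, PiTensorProduct R (fun _ : Fin n => V)

/-- The canonical inclusion `V^{⊗n} → T(V)`. -/
noncomputable def tmOf (R V : Type) [CommRing R] [AddCommGroup V] [Module R V] (n : ℕ) :
    PiTensorProduct R (fun _ : Fin n => V) →ₗ[R] TensorModule R V :=
  DirectSum.lof R ℕ (fun n => PiTensorProduct R (fun _ : Fin n => V)) n

/-- A permutation `σ` of `Fin (p+q)` is a `(p,q)`-shuffle if it is strictly increasing on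
the first `p` positions and on the last `q` positions. -/
def IsShuffle (p q : ℕ) (σ : Equiv.Perm (Fin (p + q))) : Prop :=
  (∀ i j : Fin p, i < j → σ (Fin.castAdd q i) < σ (Fin.castAdd q j)) ∧
  (∀ i j : Fin q, i < j → σ (Fin.natAdd p i) < σ (Fin.natAdd p j))

instance (p q : ℕ) : DecidablePred (IsShuffle p q) := fun σ => by
  unfold IsShuffle; infer_instance

/-!
Shuffles are representatives of the left cosets of `S_p × S_q` in `S_{p+q}`: every permutation
factors uniquely as `τ * b` with `τ` a shuffle and `b` a block permutation (`b` sorts the images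
of the two blocks, and a shuffle is determined by those images). Hence each bracketing of a triple
product runs bijectively over the permutations increasing on three consecutive blocks, which is
associativity. Conjugating by the block swap `Fin (p + q) ≃ Fin (q + p)` exchanges `Sh(p,q)` and
`Sh(q,p)`, which is commutativity, and `Sh(p,0) = {1}` makes the empty tensor a unit. All
identities are checked on homogeneous pure tensors and extend by multilinearity.
-/

open Equiv Function

theorem StrictMono.strictMono_comp_iff {α β γ : Type*} [Preorder α] [LinearOrder β] [Preorder γ]
    {g : β → γ} (hg : StrictMono g) {f : α → β} : StrictMono (g ∘ f) ↔ StrictMono f :=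
  ⟨fun h _ _ hab => hg.lt_iff_lt.1 (h hab), hg.comp⟩

theorem Equiv.Perm.strictMono_iff_eq_one {α : Type*} [LinearOrder α] [Finite α] {σ : Perm α} :
    StrictMono σ ↔ σ = 1 :=
  ⟨fun h => Equiv.coe_fn_injective h.eq_id, fun h => h ▸ strictMono_id⟩

theorem Equiv.coe_permCongr_inv {α β : Type*} (e : α ≃ β) (μ : Perm α) :
    ⇑(e.permCongr μ)⁻¹ = e ∘ ⇑μ⁻¹ ∘ e.symm :=
  rfl

theorem Fin.append_comp_finAddFlip {α : Type*} {m n : ℕ} (u : Fin m → α) (v : Fin n → α) :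
    Fin.append v u ∘ finAddFlip = Fin.append u v := by
  ext i
  refine Fin.addCases (fun i => ?_) (fun j => ?_) i <;> simp

variable {m n p q r : ℕ}

def blockPerm : Perm (Fin m) × Perm (Fin n) →* Perm (Fin (m + n)) :=
  finSumFinEquiv.permCongrHom.toMonoidHom.comp (Perm.sumCongrHom _ _)

@[simp]
theorem blockPerm_apply_castAdd (σ : Perm (Fin m) × Perm (Fin n)) (i : Fin m) :
    blockPerm σ (Fin.castAdd n i) = Fin.castAdd n (σ.1 i) := by
  simp [blockPerm]

@[simp]
theorem blockPerm_apply_natAdd (σ : Perm (Fin m) × Perm (Fin n)) (j : Fin n) :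
    blockPerm σ (Fin.natAdd m j) = Fin.natAdd m (σ.2 j) := by
  simp [blockPerm]

theorem blockPerm_injective : Injective (blockPerm (m := m) (n := n)) :=
  finSumFinEquiv.permCongrHom.injective.comp Perm.sumCongrHom_injective

theorem append_comp_blockPerm {α : Type*} (u : Fin m → α) (v : Fin n → α)
    (σ : Perm (Fin m) × Perm (Fin n)) :
    Fin.append u v ∘ blockPerm σ = Fin.append (u ∘ σ.1) (v ∘ σ.2) := by
  ext i
  refine Fin.addCases (fun i => ?_) (fun j => ?_) i <;> simp

theorem mul_blockPerm_comp_castAdd (τ : Perm (Fin (m + n))) (σ : Perm (Fin m) × Perm (Fin n)) :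
    ⇑(τ * blockPerm σ) ∘ Fin.castAdd n = (τ ∘ Fin.castAdd n) ∘ σ.1 := by
  ext; simp

theorem mul_blockPerm_comp_natAdd (τ : Perm (Fin (m + n))) (σ : Perm (Fin m) × Perm (Fin n)) :
    ⇑(τ * blockPerm σ) ∘ Fin.natAdd m = (τ ∘ Fin.natAdd m) ∘ σ.2 := by
  ext; simp

theorem isShuffle_iff {τ : Perm (Fin (m + n))} :
    IsShuffle m n τ ↔ StrictMono (τ ∘ Fin.castAdd n) ∧ StrictMono (τ ∘ Fin.natAdd m) :=
  Iff.rfl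

theorem IsShuffle.strictMono_comp_castAdd {τ : Perm (Fin (m + n))} (hτ : IsShuffle m n τ) :
    StrictMono (τ ∘ Fin.castAdd n) :=
  hτ.1

theorem IsShuffle.strictMono_comp_natAdd {τ : Perm (Fin (m + n))} (hτ : IsShuffle m n τ) :
    StrictMono (τ ∘ Fin.natAdd m) :=
  hτ.2

theorem exists_isShuffle_mul_blockPerm_eq (π : Perm (Fin (m + n))) :
    ∃ τ σ, IsShuffle m n τ ∧ τ * blockPerm σ = π := by
  set sort := (Tuple.sort (π ∘ Fin.castAdd n), Tuple.sort (π ∘ Fin.natAdd m))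
  refine ⟨π * blockPerm sort, sort⁻¹, isShuffle_iff.2 ⟨?_, ?_⟩, by simp [mul_assoc]⟩
  · rw [mul_blockPerm_comp_castAdd]
    exact (Tuple.monotone_sort _).strictMono_of_injective
      ((π.injective.comp (Fin.castAdd_injective m n)).comp sort.1.injective)
  · rw [mul_blockPerm_comp_natAdd]
    exact (Tuple.monotone_sort _).strictMono_of_injective
      ((π.injective.comp (Fin.natAdd_injective n m)).comp sort.2.injective)

theorem IsShuffle.eq_of_mul_blockPerm_eq {τ τ' : Perm (Fin (m + n))} (hτ : IsShuffle m n τ)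
    (hτ' : IsShuffle m n τ') {σ σ' : Perm (Fin m) × Perm (Fin n)}
    (h : τ * blockPerm σ = τ' * blockPerm σ') : τ = τ' ∧ σ = σ' := by
  have hleft : ⇑τ ∘ Fin.castAdd n = τ' ∘ Fin.castAdd n := by
    have := congrArg (fun π : Perm _ => Set.range (π ∘ Fin.castAdd n)) h
    simp only [mul_blockPerm_comp_castAdd, EquivLike.range_comp] at this
    exact (hτ.strictMono_comp_castAdd.range_inj hτ'.strictMono_comp_castAdd).1 this
  have hright : ⇑τ ∘ Fin.natAdd m = τ' ∘ Fin.natAdd m := by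
    have := congrArg (fun π : Perm _ => Set.range (π ∘ Fin.natAdd m)) h
    simp only [mul_blockPerm_comp_natAdd, EquivLike.range_comp] at this
    exact (hτ.strictMono_comp_natAdd.range_inj hτ'.strictMono_comp_natAdd).1 this
  obtain rfl : τ = τ' := Equiv.ext fun i => Fin.addCases (congrFun hleft) (congrFun hright) i
  exact ⟨rfl, blockPerm_injective (mul_left_cancel h)⟩

theorem IsShuffle.strictMono_mul_blockPerm_comp_castAdd_iff {τ : Perm (Fin (m + n))}
    (hτ : IsShuffle m n τ) (σ : Perm (Fin m) × Perm (Fin n)) {α : Type*} [Preorder α]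
    (f : α → Fin m) :
    StrictMono (⇑(τ * blockPerm σ) ∘ Fin.castAdd n ∘ f) ↔ StrictMono (σ.1 ∘ f) := by
  rw [← comp_assoc, mul_blockPerm_comp_castAdd, comp_assoc]
  exact hτ.strictMono_comp_castAdd.strictMono_comp_iff

theorem IsShuffle.strictMono_mul_blockPerm_comp_natAdd_iff {τ : Perm (Fin (m + n))}
    (hτ : IsShuffle m n τ) (σ : Perm (Fin m) × Perm (Fin n)) {α : Type*} [Preorder α]
    (f : α → Fin n) :
    StrictMono (⇑(τ * blockPerm σ) ∘ Fin.natAdd m ∘ f) ↔ StrictMono (σ.2 ∘ f) := by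
  rw [← comp_assoc, mul_blockPerm_comp_natAdd, comp_assoc]
  exact hτ.strictMono_comp_natAdd.strictMono_comp_iff

theorem sum_filter_eq_sum_isShuffle_mul_blockPerm {M : Type*} [AddCommMonoid M]
    {P : Perm (Fin (m + n)) → Prop} [DecidablePred P] (A : Finset (Perm (Fin m) × Perm (Fin n)))
    (hP : ∀ τ, IsShuffle m n τ → ∀ σ, P (τ * blockPerm σ) ↔ σ ∈ A) (F : Perm (Fin (m + n)) → M) :
    ∑ π ∈ Finset.univ.filter P, F π =
      ∑ τ ∈ Finset.univ.filter (IsShuffle m n), ∑ σ ∈ A, F (τ * blockPerm σ) := by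
  rw [← Finset.sum_product']
  symm
  refine Finset.sum_nbij (fun x => x.1 * blockPerm x.2) ?_ ?_ ?_ (fun _ _ => rfl)
  · rintro ⟨τ, σ⟩ hx
    simp only [Finset.mem_product, Finset.mem_filter, Finset.mem_univ, true_and] at hx ⊢
    exact (hP τ hx.1 σ).2 hx.2
  · rintro ⟨τ, σ⟩ hx ⟨τ', σ'⟩ hx' h
    simp only [Finset.coe_product, Finset.coe_filter, Set.mem_prod, Set.mem_ofPred_eq] at hx hx'
    obtain ⟨rfl, rfl⟩ := hx.1.2.eq_of_mul_blockPerm_eq hx'.1.2 h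
    rfl
  · intro π hπ
    obtain ⟨τ, σ, hτ, rfl⟩ := exists_isShuffle_mul_blockPerm_eq π
    simp only [Finset.coe_filter, Finset.mem_univ, true_and, Set.mem_ofPred_eq] at hπ
    exact ⟨(τ, σ), by simpa [hτ] using (hP τ hτ σ).1 hπ, rfl⟩

def IsShuffle₃ (p q r : ℕ) (π : Perm (Fin (p + q + r))) : Prop :=
  StrictMono (π ∘ Fin.castAdd r ∘ Fin.castAdd q) ∧
    StrictMono (π ∘ Fin.castAdd r ∘ Fin.natAdd p) ∧ StrictMono (π ∘ Fin.natAdd (p + q))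

instance : DecidablePred (IsShuffle₃ p q r) := fun π => by
  unfold IsShuffle₃; infer_instance

theorem IsShuffle.isShuffle₃_mul_blockPerm_iff {τ : Perm (Fin (p + q + r))}
    (hτ : IsShuffle (p + q) r τ) (σ : Perm (Fin (p + q)) × Perm (Fin r)) :
    IsShuffle₃ p q r (τ * blockPerm σ) ↔ IsShuffle p q σ.1 ∧ σ.2 = 1 := by
  rw [IsShuffle₃, hτ.strictMono_mul_blockPerm_comp_castAdd_iff,
    hτ.strictMono_mul_blockPerm_comp_castAdd_iff, ← comp_id (Fin.natAdd (p + q)),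
    hτ.strictMono_mul_blockPerm_comp_natAdd_iff, comp_id, Perm.strictMono_iff_eq_one, ← and_assoc]
  rfl

theorem sum_isShuffle₃_eq_sum_left_bracketing {M : Type*} [AddCommMonoid M]
    (F : Perm (Fin (p + q + r)) → M) :
    ∑ π ∈ Finset.univ.filter (IsShuffle₃ p q r), F π =
      ∑ σ ∈ Finset.univ.filter (IsShuffle p q), ∑ τ ∈ Finset.univ.filter (IsShuffle (p + q) r),
        F (τ * blockPerm (σ, 1)) := by
  rw [sum_filter_eq_sum_isShuffle_mul_blockPerm (Finset.univ.filter (IsShuffle p q) ×ˢ {1})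
    fun τ hτ σ => by
      simp only [hτ.isShuffle₃_mul_blockPerm_iff, Finset.mem_product, Finset.mem_filter,
        Finset.mem_univ, true_and, Finset.mem_singleton],
    Finset.sum_comm]
  simp only [Finset.sum_product, Finset.sum_singleton]

theorem IsShuffle.isShuffle₃_permCongr_mul_blockPerm_iff {τ : Perm (Fin (p + (q + r)))}
    (hτ : IsShuffle p (q + r) τ) (σ : Perm (Fin p) × Perm (Fin (q + r))) :
    IsShuffle₃ p q r ((finCongr (Nat.add_assoc p q r).symm).permCongr (τ * blockPerm σ)) ↔
      σ.1 = 1 ∧ IsShuffle q r σ.2 := by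
  set c := finCongr (Nat.add_assoc p q r).symm
  set μ := τ * blockPerm σ
  have hc : StrictMono c := fun _ _ => id
  have h₁ :
      ⇑(c.permCongr μ) ∘ Fin.castAdd r ∘ Fin.castAdd q = c ∘ μ ∘ Fin.castAdd (q + r) ∘ id := by
    ext; simp [c, Fin.castAdd_castAdd]
  have h₂ :
      ⇑(c.permCongr μ) ∘ Fin.castAdd r ∘ Fin.natAdd p = c ∘ μ ∘ Fin.natAdd p ∘ Fin.castAdd r := by
    ext; simp [c, Fin.castAdd_natAdd]
  have h₃ : ⇑(c.permCongr μ) ∘ Fin.natAdd (p + q) = c ∘ μ ∘ Fin.natAdd p ∘ Fin.natAdd q := by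
    ext; simp [c, Fin.natAdd_natAdd]
  rw [IsShuffle₃, h₁, h₂, h₃, hc.strictMono_comp_iff, hc.strictMono_comp_iff,
    hc.strictMono_comp_iff, hτ.strictMono_mul_blockPerm_comp_castAdd_iff,
    hτ.strictMono_mul_blockPerm_comp_natAdd_iff, hτ.strictMono_mul_blockPerm_comp_natAdd_iff, comp_id, Perm.strictMono_iff_eq_one]
  rfl

theorem sum_isShuffle₃_eq_sum_right_bracketing {M : Type*} [AddCommMonoid M]
    (F : Perm (Fin (p + q + r)) → M) :
    ∑ π ∈ Finset.univ.filter (IsShuffle₃ p q r), F π =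
      ∑ ρ ∈ Finset.univ.filter (IsShuffle q r), ∑ τ ∈ Finset.univ.filter (IsShuffle p (q + r)),
        F ((finCongr (Nat.add_assoc p q r).symm).permCongr (τ * blockPerm (1, ρ))) := by
  rw [← Finset.sum_equiv (finCongr (Nat.add_assoc p q r).symm).permCongr
      (s := Finset.univ.filter fun μ =>
        IsShuffle₃ p q r ((finCongr (Nat.add_assoc p q r).symm).permCongr μ))
      (by simp) (fun _ _ => rfl),
    sum_filter_eq_sum_isShuffle_mul_blockPerm ({1} ×ˢ Finset.univ.filter (IsShuffle q r))
      fun τ hτ σ => by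
        simp only [hτ.isShuffle₃_permCongr_mul_blockPerm_iff, Finset.mem_product,
          Finset.mem_filter, Finset.mem_univ, true_and, Finset.mem_singleton],
    Finset.sum_comm]
  simp only [Finset.sum_product, Finset.sum_singleton]

theorem sum_isShuffle_append_assoc {α M : Type*} [AddCommMonoid M]
    (G : (Fin (p + q + r) → α) → M) (u : Fin p → α) (v : Fin q → α) (w : Fin r → α) :
    ∑ σ ∈ Finset.univ.filter (IsShuffle p q), ∑ τ ∈ Finset.univ.filter (IsShuffle (p + q) r),
        G (Fin.append (Fin.append u v ∘ ⇑σ⁻¹) w ∘ ⇑τ⁻¹) =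
      ∑ ρ ∈ Finset.univ.filter (IsShuffle q r), ∑ τ ∈ Finset.univ.filter (IsShuffle p (q + r)),
        G (Fin.append u (Fin.append v w ∘ ⇑ρ⁻¹) ∘ ⇑τ⁻¹ ∘ Fin.cast (Nat.add_assoc p q r)) := by
  have hleft (σ : Perm (Fin (p + q))) (τ : Perm (Fin (p + q + r))) :
      Fin.append (Fin.append u v ∘ ⇑σ⁻¹) w ∘ ⇑τ⁻¹ =
        Fin.append (Fin.append u v) w ∘ ⇑(τ * blockPerm (σ, 1) : Perm (Fin (p + q + r)))⁻¹ := by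
    rw [mul_inv_rev, Perm.coe_mul, ← map_inv blockPerm, Prod.inv_mk, inv_one, ← comp_assoc,
      append_comp_blockPerm]
    rfl
  have hright (ρ : Perm (Fin (q + r))) (τ : Perm (Fin (p + (q + r)))) :
      Fin.append u (Fin.append v w ∘ ⇑ρ⁻¹) ∘ ⇑τ⁻¹ ∘ Fin.cast (Nat.add_assoc p q r) =
        Fin.append (Fin.append u v) w ∘
          ⇑((finCongr (Nat.add_assoc p q r).symm).permCongr (τ * blockPerm (1, ρ)))⁻¹ := by
    rw [Equiv.coe_permCongr_inv, mul_inv_rev, Perm.coe_mul, ← map_inv blockPerm, Prod.inv_mk,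
      inv_one, Fin.append_assoc]
    ext x
    simp only [comp_apply, finCongr_apply, Fin.cast_cast, Fin.cast_eq_self, finCongr_symm]
    rw [← comp_apply (f := Fin.append u (Fin.append v w)), append_comp_blockPerm]
    rfl
  simp only [hleft, hright]
  exact (sum_isShuffle₃_eq_sum_left_bracketing _).symm.trans
    (sum_isShuffle₃_eq_sum_right_bracketing fun π =>
      G (Fin.append (Fin.append u v) w ∘ ⇑π⁻¹))

theorem sum_isShuffle_append_comm {α M : Type*} [AddCommMonoid M] (G : (Fin (q + p) → α) → M)
    (u : Fin p → α) (v : Fin q → α) :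
    ∑ σ ∈ Finset.univ.filter (IsShuffle p q),
        G (Fin.append u v ∘ ⇑σ⁻¹ ∘ Fin.cast (Nat.add_comm q p)) =
      ∑ τ ∈ Finset.univ.filter (IsShuffle q p), G (Fin.append v u ∘ ⇑τ⁻¹) := by
  have hc : StrictMono (finCongr (Nat.add_comm p q)) := fun _ _ => id
  refine Finset.sum_equiv (finAddFlip.equivCongr (finCongr (Nat.add_comm p q)))
    (fun σ => ?_) (fun σ _ => ?_)
  · have h₁ : ⇑(finAddFlip.equivCongr (finCongr (Nat.add_comm p q)) σ) ∘ Fin.castAdd p =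
        finCongr (Nat.add_comm p q) ∘ σ ∘ Fin.natAdd p := by
      ext; simp [finAddFlip]
    have h₂ : ⇑(finAddFlip.equivCongr (finCongr (Nat.add_comm p q)) σ) ∘ Fin.natAdd q =
        finCongr (Nat.add_comm p q) ∘ σ ∘ Fin.castAdd q := by
      ext; simp [finAddFlip]
    simp only [Finset.mem_filter, Finset.mem_univ, true_and, isShuffle_iff, h₁, h₂,
      hc.strictMono_comp_iff, and_comm]
  · show _ = G (Fin.append v u ∘ finAddFlip ∘ ⇑σ⁻¹ ∘ Fin.cast (Nat.add_comm q p))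
    simp only [← comp_assoc, Fin.append_comp_finAddFlip]

theorem filter_isShuffle_zero_right (p : ℕ) :
    Finset.univ.filter (IsShuffle p 0) = {1} := by
  ext σ
  simp only [Finset.mem_filter, Finset.mem_univ, true_and, Finset.mem_singleton]
  refine ⟨fun hσ => Perm.strictMono_iff_eq_one.1 hσ.strictMono_comp_castAdd, ?_⟩
  rintro rfl
  exact isShuffle_iff.2 ⟨Fin.strictMono_castAdd 0, fun i => i.elim0⟩

section TensorModule

open PiTensorProduct

variable {R V : Type} [CommRing R] [AddCommGroup V] [Module R V]

theorem tmOf_tprod_cast {m n : ℕ} (h : m = n) (v : Fin m → V) :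
    tmOf R V m (tprod R v) = tmOf R V n (tprod R (v ∘ Fin.cast h.symm)) := by
  subst h
  rfl

theorem TensorModule.linearMap_ext {M : Type*} [AddCommGroup M] [Module R M]
    {f g : TensorModule R V →ₗ[R] M}
    (h : ∀ (n : ℕ) (v : Fin n → V), f (tmOf R V n (tprod R v)) = g (tmOf R V n (tprod R v))) :
    f = g :=
  DirectSum.linearMap_ext R fun n => PiTensorProduct.ext <| MultilinearMap.ext (h n)

def IsShuffleProduct (mul : TensorModule R V →ₗ[R] TensorModule R V →ₗ[R] TensorModule R V) :
    Prop :=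
  ∀ (p q : ℕ) (v : Fin p → V) (w : Fin q → V),
    mul (tmOf R V p (tprod R v)) (tmOf R V q (tprod R w)) =
      tmOf R V (p + q)
        (∑ σ ∈ Finset.univ.filter (IsShuffle p q), tprod R (fun k => Fin.append v w (σ⁻¹ k)))

namespace IsShuffleProduct

variable {mul : TensorModule R V →ₗ[R] TensorModule R V →ₗ[R] TensorModule R V}

theorem mul_tprod (hmul : IsShuffleProduct mul) {p q : ℕ} (v : Fin p → V) (w : Fin q → V) :
    mul (tmOf R V p (tprod R v)) (tmOf R V q (tprod R w)) =
      ∑ σ ∈ Finset.univ.filter (IsShuffle p q),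
        tmOf R V (p + q) (tprod R (Fin.append v w ∘ ⇑σ⁻¹)) := by
  rw [hmul, map_sum]
  rfl

theorem mul_comm_tprod (hmul : IsShuffleProduct mul) {p q : ℕ} (v : Fin p → V) (w : Fin q → V) :
    mul (tmOf R V p (tprod R v)) (tmOf R V q (tprod R w)) =
      mul (tmOf R V q (tprod R w)) (tmOf R V p (tprod R v)) := by
  simp only [hmul.mul_tprod, tmOf_tprod_cast (Nat.add_comm p q)]
  exact sum_isShuffle_append_comm (fun x => tmOf R V (q + p) (tprod R x)) v w

theorem mul_assoc_tprod (hmul : IsShuffleProduct mul) {p q r : ℕ} (u : Fin p → V)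
    (v : Fin q → V) (w : Fin r → V) :
    mul (mul (tmOf R V p (tprod R u)) (tmOf R V q (tprod R v))) (tmOf R V r (tprod R w)) =
      mul (tmOf R V p (tprod R u)) (mul (tmOf R V q (tprod R v)) (tmOf R V r (tprod R w))) := by
  simp only [hmul.mul_tprod, map_sum, LinearMap.sum_apply,
    tmOf_tprod_cast (Nat.add_assoc p q r).symm]
  exact sum_isShuffle_append_assoc (fun x => tmOf R V (p + q + r) (tprod R x)) u v w

theorem mul_one_tprod (hmul : IsShuffleProduct mul) {p : ℕ} (v : Fin p → V) :
    mul (tmOf R V p (tprod R v)) (tmOf R V 0 (tprod R (fun i : Fin 0 => i.elim0))) =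
      tmOf R V p (tprod R v) := by
  rw [hmul.mul_tprod, filter_isShuffle_zero_right, Finset.sum_singleton]
  simp

end IsShuffleProduct

end TensorModule

/-- The (sign-free) shuffle product on the tensor module `T(V) = ⨁_{n∈ℕ} V^{⊗n}`,
i.e. the bilinear map given on homogeneous tensors by
`μ_sh((v₁⊗…⊗v_p) ⊗ (v_{p+1}⊗…⊗v_{p+q})) = Σ_{σ ∈ Sh(p,q)} v_{σ⁻¹(1)} ⊗ … ⊗ v_{σ⁻¹(p+q)}`,
is associative and commutative with the empty tensor `1 ∈ R = V^{⊗0}` as a two-sided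
unit; thus `(T(V), μ_sh)` is a commutative associative unital `R`-algebra. -/
theorem shuffle_product_comm_assoc_unital {R V : Type} [CommRing R] [AddCommGroup V]
    [Module R V]
    (mul : TensorModule R V →ₗ[R] TensorModule R V →ₗ[R] TensorModule R V)
    (hmul : ∀ (p q : ℕ) (v : Fin p → V) (w : Fin q → V),
      mul (tmOf R V p (PiTensorProduct.tprod R v))
          (tmOf R V q (PiTensorProduct.tprod R w)) =
        tmOf R V (p + q)
          (∑ σ ∈ Finset.univ.filter (IsShuffle p q),
            PiTensorProduct.tprod R (fun k => Fin.append v w (σ⁻¹ k)))) :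
    (∀ x y z : TensorModule R V, mul (mul x y) z = mul x (mul y z)) ∧
      (∀ x y : TensorModule R V, mul x y = mul y x) ∧
      (∀ x : TensorModule R V,
        mul (tmOf R V 0 (PiTensorProduct.tprod R (fun i : Fin 0 => i.elim0))) x = x ∧
        mul x (tmOf R V 0 (PiTensorProduct.tprod R (fun i : Fin 0 => i.elim0))) = x) := by
  have hmul : IsShuffleProduct mul := hmul
  have hassoc : mul.compr₂ mul = (LinearMap.llcomp R _ _ _).compl₁₂ mul mul :=
    TensorModule.linearMap_ext fun _ u => TensorModule.linearMap_ext fun _ v =>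
      TensorModule.linearMap_ext fun _ w => hmul.mul_assoc_tprod u v w
  have hcomm : mul = mul.flip :=
    TensorModule.linearMap_ext fun _ v => TensorModule.linearMap_ext fun _ w =>
      hmul.mul_comm_tprod v w
  have hone : mul.flip (tmOf R V 0 (PiTensorProduct.tprod R (fun i : Fin 0 => i.elim0))) =
      LinearMap.id :=
    TensorModule.linearMap_ext fun _ v => hmul.mul_one_tprod v
  have mul_comm x y : mul x y = mul y x := LinearMap.congr_fun₂ hcomm x y
  have mul_one x := LinearMap.congr_fun hone x
  refine ⟨fun x y z => LinearMap.congr_fun (LinearMap.congr_fun₂ hassoc x y) z, mul_comm,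
    fun x => ⟨?_, mul_one x⟩⟩
  rw [mul_comm]
  exact mul_one x
end

section
/- The deconcatenation coproduct Δ : T(V) → T(V) ⊗ T(V), defined on homogeneous tensors by Δ(v_1⊗…⊗v_n) = Σ_{i=0}^{n} (v_1⊗…⊗v_i) ⊗ (v_{i+1}⊗…⊗v_n) (with empty factors equal to 1 ∈ R = V^{⊗0}), is a homomorphism of R-algebras from (T(V), μ_sh) to (T(V), μ_sh) ⊗ (T(V), μ_sh) with its componentwise product; that is, Δ(x *_sh y) = Δ(x) · Δ(y), so the shuffle product and the deconcatenation coproduct make T(V) a bialgebra. -/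
open scoped DirectSum TensorProduct

/-! Encode a `(p,q)`-shuffle of two words by the set `S ⊆ [0, p+q)` of positions that receive
the letters of the first word. Cutting the shuffled word at `m` splits `S` into `S ∩ [0, m)` and
the shifted rest; if `i` of the first `m` positions lie in `S`, these are a shuffle of the first
`i` letters of `v` with the first `m - i` letters of `w` and a shuffle of the remaining letters.
This is a bijection between (shuffle, cut) pairs and (cut of `v`, cut of `w`, shuffle of the
prefixes, shuffle of the suffixes) quadruples, so both sides of `Δ(x ш y) = Δ(x) · Δ(y)` are the
same sum when `x`, `y` are pure tensors, and bilinearity does the rest. -/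

open Finset

section SplitRange

variable {A B : Finset ℕ} {m : ℕ}

theorem disjoint_map_addLeftEmbedding (hA : A ⊆ range m) :
    Disjoint A (B.map (addLeftEmbedding m)) := by
  refine disjoint_left.2 fun k hkA hkB => ?_
  obtain ⟨l, -, rfl⟩ := mem_map.1 hkB
  have := mem_range.1 (hA hkA)
  simp at this

theorem union_map_addLeftEmbedding_inter_range (hA : A ⊆ range m) :
    (A ∪ B.map (addLeftEmbedding m)) ∩ range m = A := by
  ext k
  simp only [mem_inter, mem_union, mem_map, addLeftEmbedding_apply, mem_range]
  constructor
  · rintro ⟨hk | ⟨l, -, rfl⟩, hkm⟩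
    · exact hk
    · omega
  · exact fun hk => ⟨Or.inl hk, mem_range.1 (hA hk)⟩

theorem preimage_union_map_addLeftEmbedding (hA : A ⊆ range m) :
    (A ∪ B.map (addLeftEmbedding m)).preimage (m + ·) (add_right_injective m).injOn = B := by
  ext k
  simp only [mem_preimage, mem_union, mem_map, addLeftEmbedding_apply, add_right_inj,
    exists_eq_right]
  refine or_iff_right fun hk => ?_
  have := mem_range.1 (hA hk)
  omega

theorem union_map_addLeftEmbedding_subset_range {n : ℕ} (hA : A ⊆ range m) (hB : B ⊆ range n) :
    A ∪ B.map (addLeftEmbedding m) ⊆ range (m + n) := by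
  refine union_subset (hA.trans (range_subset_range.2 (Nat.le_add_right m n))) fun k hk => ?_
  obtain ⟨l, hl, rfl⟩ := mem_map.1 hk
  simpa using mem_range.1 (hB hl)

theorem inter_range_union_map_preimage (S : Finset ℕ) (m : ℕ) :
    S ∩ range m ∪ (S.preimage (m + ·) (add_right_injective m).injOn).map (addLeftEmbedding m)
      = S := by
  ext k
  simp only [mem_union, mem_inter, mem_range, mem_map, mem_preimage, addLeftEmbedding_apply]
  constructor
  · rintro (⟨hk, -⟩ | ⟨l, hl, rfl⟩) <;> assumption
  · intro hk
    by_cases hkm : k < m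
    · exact Or.inl ⟨hk, hkm⟩
    · exact Or.inr ⟨k - m, by rwa [Nat.add_sub_cancel' (not_lt.1 hkm)], by omega⟩

theorem preimage_add_subset_range {S : Finset ℕ} {n : ℕ} (hS : S ⊆ range n) (m : ℕ) :
    S.preimage (m + ·) (add_right_injective m).injOn ⊆ range (n - m) := fun k hk => by
  have := mem_range.1 (hS (mem_preimage.1 hk))
  exact mem_range.2 (by omega)

end SplitRange

namespace Nat

theorem count_congr {p q : ℕ → Prop} [DecidablePred p] [DecidablePred q] {n : ℕ}
    (h : ∀ k < n, p k ↔ q k) : count p n = count q n := by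
  simp only [count_eq_card_filter_range]
  exact congrArg card (filter_congr fun k hk => h k (mem_range.1 hk))

theorem count_add_count_not (p : ℕ → Prop) [DecidablePred p] (n : ℕ) :
    count p n + count (fun k => ¬p k) n = n := by
  simp only [count_eq_card_filter_range]
  rw [card_filter_add_card_filter_not, card_range]

theorem count_mem_eq_card_inter_range (S : Finset ℕ) (m : ℕ) :
    count (· ∈ S) m = #(S ∩ range m) := by
  rw [count_eq_card_filter_range, filter_mem_eq_inter, inter_comm]

theorem count_mem_add_card_preimage (S : Finset ℕ) (m : ℕ) :
    count (· ∈ S) m + #(S.preimage (m + ·) (add_right_injective m).injOn) = #S := by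
  conv_rhs => rw [← inter_range_union_map_preimage S m]
  rw [card_union_of_disjoint (disjoint_map_addLeftEmbedding inter_subset_right), card_map,
    count_mem_eq_card_inter_range]

theorem count_mem_le_and_count_not_mem_le {S : Finset ℕ} {p q m : ℕ} (hS : S ⊆ range (p + q))
    (hSp : #S = p) (hm : m ≤ p + q) : count (· ∈ S) m ≤ p ∧ count (· ∉ S) m ≤ q := by
  have hsum := count_add_count_not (· ∈ S) m
  have hcard := count_mem_add_card_preimage S m
  have hpre := card_le_card (preimage_add_subset_range hS m)
  rw [card_range] at hpre
  omega

theorem count_orderEmbOfFin {n k : ℕ} (U : Finset (Fin n)) (h : #U = k) {P : ℕ → Prop}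
    [DecidablePred P] (hP : ∀ x : Fin n, P x ↔ x ∈ U) (i : Fin k) :
    count P (U.orderEmbOfFin h i) = i := by
  set e := U.orderEmbOfFin h
  have hfilter : {l ∈ range (e i) | P l} = (Iio i).map (e.toEmbedding.trans Fin.valEmbedding) := by
    ext l
    simp only [mem_filter, mem_range, mem_map, mem_Iio, Function.Embedding.trans_apply,
      RelEmbedding.coe_toEmbedding, Fin.valEmbedding_apply]
    constructor
    · rintro ⟨hl, hPl⟩
      have hln : l < n := hl.trans (e i).isLt
      obtain ⟨j, hj⟩ : (⟨l, hln⟩ : Fin n) ∈ Set.range e := by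
        rw [range_orderEmbOfFin]; exact (hP ⟨l, hln⟩).1 hPl
      refine ⟨j, e.lt_iff_lt.1 ?_, by rw [hj]⟩
      rw [hj, Fin.lt_def]; exact hl
    · rintro ⟨j, hj, rfl⟩
      exact ⟨e.strictMono hj, (hP _).2 (orderEmbOfFin_mem U h j)⟩
  rw [count_eq_card_filter_range, hfilter, card_map, Fin.card_Iio]

end Nat

section ShuffleWord

variable {V : Type*}

/-- The interleaving of the words `v` and `w` in which the positions in `S` read the next
unused letter of `v`, and the others the next unused letter of `w`. -/
def shuffleWord (S : Finset ℕ) (v w : ℕ → V) (k : ℕ) : V :=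
  if k ∈ S then v (Nat.count (· ∈ S) k) else w (Nat.count (· ∉ S) k)

theorem shuffleWord_inter_range {S : Finset ℕ} {m k : ℕ} (hk : k < m) (v w : ℕ → V) :
    shuffleWord (S ∩ range m) v w k = shuffleWord S v w k := by
  have hmem : ∀ l ≤ k, l ∈ S ∩ range m ↔ l ∈ S := fun l hl => by
    simp only [mem_inter, mem_range, and_iff_left_iff_imp]; intro; omega
  unfold shuffleWord
  rw [Nat.count_congr fun l hl => hmem l hl.le,
    Nat.count_congr fun l hl => not_congr (hmem l hl.le)]
  exact if_congr (hmem k le_rfl) rfl rfl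

theorem shuffleWord_add (S : Finset ℕ) (m k : ℕ) (v w : ℕ → V) :
    shuffleWord S v w (m + k) =
      shuffleWord (S.preimage (m + ·) (add_right_injective m).injOn)
        (fun l => v (Nat.count (· ∈ S) m + l)) (fun l => w (Nat.count (· ∉ S) m + l)) k := by
  simp only [shuffleWord, mem_preimage, Nat.count_add]

theorem sum_cut_shuffleWord_eq_sum_shuffleWord_cut {M : Type*} [AddCommMonoid M]
    (F : ℕ → (ℕ → V) → ℕ → (ℕ → V) → M)
    (hF : ∀ a b (u u' w w' : ℕ → V), (∀ k < a, u k = u' k) → (∀ k < b, w k = w' k) →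
      F a u b w = F a u' b w')
    (p q : ℕ) (v w : ℕ → V) :
    ∑ S ∈ powersetCard p (range (p + q)), ∑ m ∈ range (p + q + 1),
        F m (shuffleWord S v w) (p + q - m) (fun k => shuffleWord S v w (m + k)) =
      ∑ i ∈ range (p + 1), ∑ j ∈ range (q + 1),
        ∑ A ∈ powersetCard i (range (i + j)), ∑ B ∈ powersetCard (p - i) (range (p - i + (q - j))),
          F (i + j) (shuffleWord A v w) (p - i + (q - j))
            (shuffleWord B (fun k => v (i + k)) (fun k => w (j + k))) := by
  simp only [← sum_product', sum_sigma']
  refine sum_nbij'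
    (fun x => ⟨Nat.count (· ∈ x.1) x.2, Nat.count (· ∉ x.1) x.2,
      x.1 ∩ range x.2, x.1.preimage (x.2 + ·) (add_right_injective x.2).injOn⟩)
    (fun y => (y.2.2.1 ∪ y.2.2.2.map (addLeftEmbedding (y.1 + y.2.1)), y.1 + y.2.1))
    ?_ ?_ ?_ ?_ ?_
  · rintro ⟨S, m⟩ hSm
    simp only [mem_product, mem_powersetCard, mem_range] at hSm
    obtain ⟨⟨hS, hSp⟩, hm⟩ := hSm
    obtain ⟨hc, hc'⟩ := Nat.count_mem_le_and_count_not_mem_le hS hSp (Nat.le_of_lt_succ hm)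
    have hsum := Nat.count_add_count_not (· ∈ S) m
    have hcard := Nat.count_mem_add_card_preimage S m
    simp only [mem_sigma, mem_range, mem_product, mem_powersetCard]
    refine ⟨by omega, by omega, ⟨?_, (Nat.count_mem_eq_card_inter_range S m).symm⟩,
      (preimage_add_subset_range hS m).trans (range_subset_range.2 (by omega)), by omega⟩
    rw [hsum]
    exact inter_subset_right
  · rintro ⟨i, j, A, B⟩ h
    simp only [mem_sigma, mem_range, mem_product, mem_powersetCard] at h
    obtain ⟨hi, hj, ⟨hA, hAcard⟩, hB, hBcard⟩ := h
    dsimp only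
    refine mem_product.2 ⟨mem_powersetCard.2 ⟨?_, ?_⟩, mem_range.2 (by omega)⟩
    · exact (union_map_addLeftEmbedding_subset_range hA hB).trans
        (range_subset_range.2 (by omega))
    · rw [card_union_of_disjoint (disjoint_map_addLeftEmbedding hA), card_map]
      omega
  · rintro ⟨S, m⟩ -
    simp only [Nat.count_add_count_not, inter_range_union_map_preimage]
  · rintro ⟨i, j, A, B⟩ h
    simp only [mem_sigma, mem_range, mem_product, mem_powersetCard] at h
    obtain ⟨-, -, ⟨hA, rfl⟩, -⟩ := h
    have hcount : Nat.count (· ∈ A ∪ B.map (addLeftEmbedding (#A + j))) (#A + j) = #A := by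
      rw [Nat.count_mem_eq_card_inter_range, union_map_addLeftEmbedding_inter_range hA]
    have hsum := Nat.count_add_count_not (· ∈ A ∪ B.map (addLeftEmbedding (#A + j))) (#A + j)
    rw [hcount] at hsum
    simp only [hcount, Nat.add_left_cancel hsum, union_map_addLeftEmbedding_inter_range hA,
      preimage_union_map_addLeftEmbedding hA]
  · rintro ⟨S, m⟩ hSm
    simp only [mem_product, mem_powersetCard, mem_range] at hSm
    obtain ⟨⟨hS, hSp⟩, hm⟩ := hSm
    obtain ⟨hc, hc'⟩ := Nat.count_mem_le_and_count_not_mem_le hS hSp (Nat.le_of_lt_succ hm)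
    have hsum := Nat.count_add_count_not (· ∈ S) m
    dsimp only
    rw [hsum, show p - Nat.count (· ∈ S) m + (q - Nat.count (· ∉ S) m) = p + q - m by omega]
    exact hF _ _ _ _ _ _ (fun k hk => (shuffleWord_inter_range hk v w).symm)
      (fun k _ => shuffleWord_add S m k v w)

end ShuffleWord

section ShuffleSet

variable {V : Type*} {p q : ℕ}

def shuffleSet (σ : Equiv.Perm (Fin (p + q))) : Finset (Fin (p + q)) :=
  univ.map ((Fin.castAddEmb q).trans σ.toEmbedding)

theorem card_shuffleSet (σ : Equiv.Perm (Fin (p + q))) : #(shuffleSet σ) = p := by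
  simp [shuffleSet]

theorem compl_shuffleSet (σ : Equiv.Perm (Fin (p + q))) :
    (shuffleSet σ)ᶜ = univ.map ((Fin.natAddEmb p).trans σ.toEmbedding) := by
  ext k
  obtain ⟨x, rfl⟩ := σ.surjective k
  induction x using Fin.addCases with
  | left i => simpa [shuffleSet, Fin.ext_iff] using fun x : Fin q => by omega
  | right j => simpa [shuffleSet, Fin.ext_iff] using fun x : Fin p => by omega

theorem card_compl_eq_of_card_eq {T : Finset (Fin (p + q))} (hT : #T = p) : #Tᶜ = q := by
  rw [card_compl, Fintype.card_fin, hT, Nat.add_sub_cancel_left]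

def shuffleOfSet (T : Finset (Fin (p + q))) (hT : #T = p) : Equiv.Perm (Fin (p + q)) :=
  finSumFinEquiv.symm.trans (finSumEquivOfFinset hT (card_compl_eq_of_card_eq hT))

@[simp]
theorem shuffleOfSet_castAdd {T : Finset (Fin (p + q))} (hT : #T = p) (i : Fin p) :
    shuffleOfSet T hT (Fin.castAdd q i) = T.orderEmbOfFin hT i := by
  simp [shuffleOfSet]

@[simp]
theorem shuffleOfSet_natAdd {T : Finset (Fin (p + q))} (hT : #T = p) (j : Fin q) :
    shuffleOfSet T hT (Fin.natAdd p j) = Tᶜ.orderEmbOfFin (card_compl_eq_of_card_eq hT) j := by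
  simp [shuffleOfSet]

theorem isShuffle_shuffleOfSet {T : Finset (Fin (p + q))} (hT : #T = p) :
    IsShuffle p q (shuffleOfSet T hT) := by
  constructor <;> intro i j hij <;> simpa using hij

theorem shuffleSet_shuffleOfSet {T : Finset (Fin (p + q))} (hT : #T = p) :
    shuffleSet (shuffleOfSet T hT) = T := by
  conv_rhs => rw [← map_orderEmbOfFin_univ T hT]
  rw [shuffleSet]
  congr 1
  ext i
  simp only [Function.Embedding.trans_apply, Fin.castAddEmb_apply, Equiv.toEmbedding_apply,
    shuffleOfSet_castAdd, RelEmbedding.coe_toEmbedding]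

theorem IsShuffle.shuffleOfSet_shuffleSet {σ : Equiv.Perm (Fin (p + q))} (hσ : IsShuffle p q σ) :
    shuffleOfSet (shuffleSet σ) (card_shuffleSet σ) = σ := by
  ext k
  induction k using Fin.addCases with
  | left i =>
    rw [shuffleOfSet_castAdd, ← orderEmbOfFin_unique (card_shuffleSet σ) (f := σ ∘ Fin.castAdd q)
      (fun x => by simp [shuffleSet]) (fun x y => hσ.1 x y)]
    rfl
  | right j =>
    rw [shuffleOfSet_natAdd, ← orderEmbOfFin_unique (card_compl_eq_of_card_eq (card_shuffleSet σ))
      (f := σ ∘ Fin.natAdd p) (fun x => by simp [compl_shuffleSet]) (fun x y => hσ.2 x y)]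
    rfl

theorem append_shuffleOfSet_symm_apply {T : Finset (Fin (p + q))} (hT : #T = p) (v w : ℕ → V)
    (k : Fin (p + q)) :
    Fin.append (fun i : Fin p => v i) (fun j : Fin q => w j) ((shuffleOfSet T hT)⁻¹ k) =
      shuffleWord (T.map Fin.valEmbedding) v w k := by
  obtain ⟨x, rfl⟩ := (shuffleOfSet T hT).surjective k
  rw [Equiv.Perm.inv_def, Equiv.symm_apply_apply]
  induction x using Fin.addCases with
  | left i =>
    have hmem : ((T.orderEmbOfFin hT i : Fin (p + q)) : ℕ) ∈ T.map Fin.valEmbedding :=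
      mem_map_of_mem Fin.valEmbedding (orderEmbOfFin_mem T hT i)
    rw [Fin.append_left, shuffleOfSet_castAdd, shuffleWord, if_pos hmem,
      Nat.count_orderEmbOfFin T hT (fun x => by simp [Fin.val_inj]) i]
  | right j =>
    have hmem : ((Tᶜ.orderEmbOfFin (card_compl_eq_of_card_eq hT) j : Fin (p + q)) : ℕ) ∉
        T.map Fin.valEmbedding := by
      simpa [Fin.val_inj] using mem_compl.1 (orderEmbOfFin_mem Tᶜ _ j)
    rw [Fin.append_right, shuffleOfSet_natAdd, shuffleWord, if_neg hmem,
      Nat.count_orderEmbOfFin Tᶜ _ (fun x => by simp [Fin.val_inj]) j]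

theorem sum_isShuffle_eq_sum_powersetCard {M : Type*} [AddCommMonoid M]
    (f : (Fin (p + q) → V) → M) (v w : ℕ → V) :
    ∑ σ ∈ univ.filter (IsShuffle p q),
        f (fun k => Fin.append (fun i : Fin p => v i) (fun j : Fin q => w j) (σ⁻¹ k)) =
      ∑ S ∈ powersetCard p (range (p + q)), f (fun k => shuffleWord S v w k) := by
  rw [← Nat.Iio_eq_range, ← Fin.map_valEmbedding_univ, powersetCard_map, sum_map]
  symm
  refine sum_bij' (fun T hT => shuffleOfSet T (mem_powersetCard_univ.1 hT))
    (fun σ _ => shuffleSet σ) (fun _ _ => (mem_filter_univ _).2 (isShuffle_shuffleOfSet _))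
    (fun σ _ => mem_powersetCard_univ.2 (card_shuffleSet σ))
    (fun _ _ => shuffleSet_shuffleOfSet _)
    (fun _ hσ => ((mem_filter_univ _).1 hσ).shuffleOfSet_shuffleSet) (fun _ _ => ?_)
  simp only [RelEmbedding.coe_toEmbedding, mapEmbedding_apply, append_shuffleOfSet_symm_apply]

end ShuffleSet

section TensorModule

variable (R : Type) {V : Type} [CommRing R] [AddCommGroup V] [Module R V]

noncomputable def tmWord (n : ℕ) (u : ℕ → V) : TensorModule R V :=
  tmOf R V n (PiTensorProduct.tprod R fun i : Fin n => u i)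

theorem tmWord_congr {n : ℕ} {u u' : ℕ → V} (h : ∀ k < n, u k = u' k) :
    tmWord R n u = tmWord R n u' := by
  simp only [tmWord, fun i : Fin n => h i i.isLt]

theorem tmOf_tprod_eq_tmWord (n : ℕ) (f : Fin n → V) :
    tmOf R V n (PiTensorProduct.tprod R f) = tmWord R n (Function.extend Fin.val f 0) := by
  simp only [tmWord, Fin.val_injective.extend_apply]

theorem comul_mul_tmWord
    (mul : TensorModule R V →ₗ[R] TensorModule R V →ₗ[R] TensorModule R V)
    (hmul : ∀ (p q : ℕ) (v w : ℕ → V), mul (tmWord R p v) (tmWord R q w) =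
      ∑ S ∈ powersetCard p (range (p + q)), tmWord R (p + q) (shuffleWord S v w))
    (Δ : TensorModule R V →ₗ[R] TensorModule R V ⊗[R] TensorModule R V)
    (hΔ : ∀ (n : ℕ) (u : ℕ → V), Δ (tmWord R n u) =
      ∑ i ∈ range (n + 1), tmWord R i u ⊗ₜ[R] tmWord R (n - i) (fun k => u (i + k)))
    (mul2 : TensorModule R V ⊗[R] TensorModule R V →ₗ[R]
      TensorModule R V ⊗[R] TensorModule R V →ₗ[R] TensorModule R V ⊗[R] TensorModule R V)
    (hmul2 : ∀ x y x' y' : TensorModule R V,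
      mul2 (x ⊗ₜ[R] y) (x' ⊗ₜ[R] y') = (mul x x') ⊗ₜ[R] (mul y y'))
    (p q : ℕ) (v w : ℕ → V) :
    Δ (mul (tmWord R p v) (tmWord R q w)) = mul2 (Δ (tmWord R p v)) (Δ (tmWord R q w)) := by
  have hF : ∀ a b (u u' w w' : ℕ → V), (∀ k < a, u k = u' k) → (∀ k < b, w k = w' k) →
      tmWord R a u ⊗ₜ[R] tmWord R b w = tmWord R a u' ⊗ₜ[R] tmWord R b w' :=
    fun a b u u' w w' hu hw => by rw [tmWord_congr R hu, tmWord_congr R hw]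
  rw [hmul, map_sum]
  simp only [hΔ]
  rw [sum_cut_shuffleWord_eq_sum_shuffleWord_cut _ hF, map_sum mul2, LinearMap.sum_apply]
  simp only [map_sum, hmul2, hmul, TensorProduct.sum_tmul]
  simp only [TensorProduct.tmul_sum]

end TensorModule

/-- The deconcatenation coproduct `Δ(v₁⊗…⊗v_n) = Σ_{i=0}^{n} (v₁⊗…⊗v_i) ⊗ (v_{i+1}⊗…⊗v_n)`
is a homomorphism of `R`-algebras from `(T(V), μ_sh)` to `(T(V), μ_sh) ⊗ (T(V), μ_sh)`
with its componentwise product `(x⊗y)·(x′⊗y′) = (x *_sh x′) ⊗ (y *_sh y′)`: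
`Δ(x *_sh y) = Δ(x) · Δ(y)`.  Thus the shuffle product and the deconcatenation coproduct
make `T(V)` a bialgebra. -/
theorem deconcatenation_is_algebra_map_for_shuffle {R V : Type} [CommRing R]
    [AddCommGroup V] [Module R V]
    (mul : TensorModule R V →ₗ[R] TensorModule R V →ₗ[R] TensorModule R V)
    (hmul : ∀ (p q : ℕ) (v : Fin p → V) (w : Fin q → V),
      mul (tmOf R V p (PiTensorProduct.tprod R v))
          (tmOf R V q (PiTensorProduct.tprod R w)) =
        tmOf R V (p + q)
          (∑ σ ∈ Finset.univ.filter (IsShuffle p q),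
            PiTensorProduct.tprod R (fun k => Fin.append v w (σ⁻¹ k))))
    (Δ : TensorModule R V →ₗ[R] TensorModule R V ⊗[R] TensorModule R V)
    (hΔ : ∀ (n : ℕ) (v : ℕ → V),
      Δ (tmOf R V n (PiTensorProduct.tprod R (fun i : Fin n => v i.val))) =
        ∑ i ∈ Finset.range (n + 1),
          (tmOf R V i (PiTensorProduct.tprod R (fun j : Fin i => v j.val))) ⊗ₜ[R]
            (tmOf R V (n - i) (PiTensorProduct.tprod R (fun j : Fin (n - i) => v (i + j.val)))))
    (mul2 : TensorModule R V ⊗[R] TensorModule R V →ₗ[R]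
      TensorModule R V ⊗[R] TensorModule R V →ₗ[R] TensorModule R V ⊗[R] TensorModule R V)
    (hmul2 : ∀ x y x' y' : TensorModule R V,
      mul2 (x ⊗ₜ[R] y) (x' ⊗ₜ[R] y') = (mul x x') ⊗ₜ[R] (mul y y')) :
    ∀ x y : TensorModule R V, Δ (mul x y) = mul2 (Δ x) (Δ y) := by
  have hmul_tmWord : ∀ (p q : ℕ) (v w : ℕ → V), mul (tmWord R p v) (tmWord R q w) =
      ∑ S ∈ powersetCard p (range (p + q)), tmWord R (p + q) (shuffleWord S v w) := by
    intro p q v w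
    rw [tmWord, tmWord, hmul, map_sum]
    exact sum_isShuffle_eq_sum_powersetCard
      (fun u => tmOf R V (p + q) (PiTensorProduct.tprod R u)) v w
  have hcomp : mul.compr₂ Δ = mul2.compl₁₂ Δ Δ := by
    refine DirectSum.linearMap_ext R fun p => PiTensorProduct.ext <| MultilinearMap.ext fun v => ?_
    refine DirectSum.linearMap_ext R fun q => PiTensorProduct.ext <| MultilinearMap.ext fun w => ?_
    simpa only [← tmOf.eq_def, LinearMap.compMultilinearMap_apply, LinearMap.coe_comp,
      Function.comp_apply, tmOf_tprod_eq_tmWord, LinearMap.compr₂_apply,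
      LinearMap.compl₁₂_apply] using
      comul_mul_tmWord R mul hmul_tmWord Δ hΔ mul2 hmul2 p q _ _
  exact LinearMap.congr_fun₂ hcomp
end

section
/- Universal property of the tensor coalgebra for coderivations (case of the identity coalgebra maps): let R be a commutative ring, V an R-module, and let Δ be the deconcatenation coproduct on T(V) = ⨁_{n∈ℕ} V^{⊗n}. Call an R-linear map D : T(V) → T(V) a coderivation if Δ ∘ D = (D ⊗ id + id ⊗ D) ∘ Δ. Then the assignment D ↦ p_1 ∘ D, where p_1 : T(V) → V is the projection onto the component V^{⊗1} = V, is a bijection between the set of coderivations of (T(V), Δ) and the set of R-linear maps T(V) → V; i.e., every R-linear β : T(V) → V extends to a unique coderivation D with p_1 ∘ D = β. -/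
open scoped DirectSum TensorProduct

/-- The projection `p₁ : T(V) → V` onto the component `V^{⊗1} = V`. -/
noncomputable def tmProj₁ (R V : Type) [CommRing R] [AddCommGroup V] [Module R V] :
    TensorModule R V →ₗ[R] V :=
  (PiTensorProduct.subsingletonEquiv (0 : Fin 1)).toLinearMap.comp
    (DirectSum.component R ℕ (fun n => PiTensorProduct R (fun _ : Fin n => V)) 1)

/-!
A coderivation `D` of `T(V)` is determined by `p₁ ∘ D`. Projecting the coderivation identity
`Δ ∘ D = (D ⊗ id + id ⊗ D) ∘ Δ` onto `V^{⊗1} ⊗ V^{⊗l}` expresses the degree-`(1 + l)` part of `D`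
through its parts of degrees `1` and `l`; projecting it onto `V^{⊗0} ⊗ V^{⊗0}` and using the
counit identities gives `z = z + z` for the degree-`0` part `z`.

Conversely, `β` extends to
`D (v₁ ⋯ vₙ) = ∑_{a + c ≤ n} v₁ ⋯ v_a · β (v_{a+1} ⋯ v_{n-c}) · v_{n-c+1} ⋯ vₙ`, i.e.
`D = ∑ id^{⊗a} ⊗ β ⊗ id^{⊗c}`. Deconcatenating a summand either before or after its
`β`-letter produces exactly the summands of `(id ⊗ D) ∘ Δ` and of `(D ⊗ id) ∘ Δ`.
-/

namespace TensorPower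

variable {R M : Type*} [CommSemiring R] [AddCommMonoid M] [Module R M]

theorem mulEquiv_tprod_tmul {k l : ℕ} (a : Fin k → M) (b : Fin l → M) :
    mulEquiv (PiTensorProduct.tprod R a ⊗ₜ[R] PiTensorProduct.tprod R b) =
      PiTensorProduct.tprod R (Fin.append a b) :=
  tprod_mul_tprod R a b

theorem mulEquiv_symm_tprod (k l : ℕ) (u : ℕ → M) :
    (mulEquiv (n := k) (m := l)).symm (PiTensorProduct.tprod R fun i : Fin (k + l) => u i) =
      PiTensorProduct.tprod R (fun i : Fin k => u i) ⊗ₜ[R]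
        PiTensorProduct.tprod R (fun j : Fin l => u (k + j)) := by
  rw [LinearEquiv.symm_apply_eq, mulEquiv_tprod_tmul]
  congr 1
  funext i
  refine Fin.addCases (fun i => ?_) (fun j => ?_) i <;> simp

theorem mulEquiv_tmul_tprod_elim0 (z : ⨂[R]^0 M) :
    mulEquiv (z ⊗ₜ[R] PiTensorProduct.tprod R Fin.elim0) = z := by
  simpa [gMul_def, gOne_def] using mul_one z

theorem mulEquiv_tprod_elim0_tmul (z : ⨂[R]^0 M) :
    mulEquiv (PiTensorProduct.tprod R Fin.elim0 ⊗ₜ[R] z) = z := by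
  simpa [gMul_def, gOne_def] using one_mul z

end TensorPower

namespace Finset.Nat

def boundedPairs (n : ℕ) : Finset (ℕ × ℕ) :=
  (range (n + 1) ×ˢ range (n + 1)).filter fun p => p.1 + p.2 ≤ n

theorem mem_boundedPairs {n : ℕ} {p : ℕ × ℕ} : p ∈ boundedPairs n ↔ p.1 + p.2 ≤ n := by
  simp only [boundedPairs, mem_filter, mem_product, mem_range]
  omega

variable {M : Type*} [AddCommMonoid M]

theorem sum_boundedPairs_sum_range_fst (n : ℕ) (f : ℕ → ℕ → ℕ → M) :
    ∑ p ∈ boundedPairs n, ∑ s ∈ range (p.1 + 1), f p.1 p.2 s =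
      ∑ i ∈ range (n + 1), ∑ q ∈ boundedPairs (n - i), f (i + q.1) q.2 i := by
  rw [sum_sigma', sum_sigma']
  refine sum_nbij' (fun x => ⟨x.2, (x.1.1 - x.2, x.1.2)⟩)
    (fun y => ⟨(y.1 + y.2.1, y.2.2), y.1⟩) ?_ ?_ ?_ ?_ ?_
  · rintro ⟨⟨a, c⟩, s⟩ h
    simp only [Finset.mem_sigma, mem_boundedPairs, Finset.mem_range] at h ⊢
    omega
  · rintro ⟨i, a, c⟩ h
    simp only [Finset.mem_sigma, mem_boundedPairs, Finset.mem_range] at h ⊢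
    omega
  · rintro ⟨⟨a, c⟩, s⟩ h
    simp only [Finset.mem_sigma, mem_boundedPairs, Finset.mem_range] at h
    simp only [Sigma.mk.injEq, Prod.mk.injEq, heq_eq_eq, and_true]
    omega
  · rintro ⟨i, a, c⟩ -
    simp only [Sigma.mk.injEq, Prod.mk.injEq, heq_eq_eq, and_true, true_and]
    omega
  · rintro ⟨⟨a, c⟩, s⟩ h
    simp only [Finset.mem_sigma, mem_boundedPairs, Finset.mem_range] at h
    rw [Nat.add_sub_cancel' (by omega : s ≤ a)]

theorem sum_boundedPairs_sum_range_snd (n : ℕ) (f : ℕ → ℕ → ℕ → M) :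
    ∑ p ∈ boundedPairs n, ∑ d ∈ range (p.2 + 1), f p.1 p.2 d =
      ∑ i ∈ range (n + 1), ∑ q ∈ boundedPairs i, f q.1 (n - i + q.2) q.2 := by
  rw [sum_sigma', sum_sigma']
  refine sum_nbij' (fun x => ⟨n - x.1.2 + x.2, (x.1.1, x.2)⟩)
    (fun y => ⟨(y.2.1, n - y.1 + y.2.2), y.2.2⟩) ?_ ?_ ?_ ?_ ?_
  · rintro ⟨⟨a, c⟩, d⟩ h
    simp only [Finset.mem_sigma, mem_boundedPairs, Finset.mem_range] at h ⊢
    omega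
  · rintro ⟨i, a, d⟩ h
    simp only [Finset.mem_sigma, mem_boundedPairs, Finset.mem_range] at h ⊢
    omega
  · rintro ⟨⟨a, c⟩, d⟩ h
    simp only [Finset.mem_sigma, mem_boundedPairs, Finset.mem_range] at h
    simp only [Sigma.mk.injEq, Prod.mk.injEq, heq_eq_eq, and_true, true_and]
    omega
  · rintro ⟨i, a, d⟩ h
    simp only [Finset.mem_sigma, mem_boundedPairs, Finset.mem_range] at h
    simp only [Sigma.mk.injEq, heq_eq_eq, and_true]
    omega
  · rintro ⟨⟨a, c⟩, d⟩ h
    simp only [Finset.mem_sigma, mem_boundedPairs, Finset.mem_range] at h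
    rw [show n - (n - c + d) + d = c by omega]

end Finset.Nat

namespace TensorModule

open TensorProduct Finset.Nat

variable {R V : Type} [CommRing R] [AddCommGroup V] [Module R V]

variable (R) in
noncomputable def word (n : ℕ) (v : ℕ → V) : TensorModule R V :=
  tmOf R V n (PiTensorProduct.tprod R fun i : Fin n => v i)

theorem word_congr {n n' : ℕ} (h : n = n') {v v' : ℕ → V} (hv : ∀ i < n, v i = v' i) :
    word R n v = word R n' v' := by
  subst h
  exact congrArg (tmOf R V n ∘ PiTensorProduct.tprod R) (funext fun i => hv i i.isLt)

theorem linearMap_ext_word {N : Type*} [AddCommMonoid N] [Module R N]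
    {f g : TensorModule R V →ₗ[R] N} (h : ∀ n (v : ℕ → V), f (word R n v) = g (word R n v)) :
    f = g := by
  refine DirectSum.linearMap_ext R fun n => PiTensorProduct.ext (MultilinearMap.ext fun v => ?_)
  simpa [word, tmOf] using h n fun i => if hi : i < n then v ⟨i, hi⟩ else 0

variable (R V) in
noncomputable def proj (m : ℕ) : TensorModule R V →ₗ[R] ⨂[R]^m V :=
  DirectSum.component R ℕ _ m

theorem proj_word_self (m : ℕ) (u : ℕ → V) :
    proj R V m (word R m u) = PiTensorProduct.tprod R fun i : Fin m => u i :=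
  DirectSum.component.lof_self R _ _

theorem proj_word_of_ne {m n : ℕ} (h : n ≠ m) (u : ℕ → V) : proj R V m (word R n u) = 0 := by
  rw [proj, word, tmOf, DirectSum.component.of, dif_neg h]

theorem proj_zero_word (u : ℕ → V) : proj R V 0 (word R 0 u) = PiTensorProduct.tprod R Fin.elim0 :=
  (proj_word_self 0 u).trans (congrArg _ (funext fun i => i.elim0))

theorem tmProj₁_word_one (u : ℕ → V) : tmProj₁ R V (word R 1 u) = u 0 :=
  (congrArg _ (proj_word_self 1 u)).trans (PiTensorProduct.subsingletonEquiv_apply_tprod _ _)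

theorem tmProj₁_word_of_ne {n : ℕ} (h : n ≠ 1) (u : ℕ → V) : tmProj₁ R V (word R n u) = 0 :=
  (congrArg _ (proj_word_of_ne h u)).trans (map_zero _)

def IsDeconcatenation (Δ : TensorModule R V →ₗ[R] TensorModule R V ⊗[R] TensorModule R V) :
    Prop :=
  ∀ (n : ℕ) (v : ℕ → V), Δ (word R n v) =
    ∑ i ∈ Finset.range (n + 1), word R i v ⊗ₜ[R] word R (n - i) fun j => v (i + j)

def IsCoderivation (Δ : TensorModule R V →ₗ[R] TensorModule R V ⊗[R] TensorModule R V)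
    (D : TensorModule R V →ₗ[R] TensorModule R V) : Prop :=
  Δ ∘ₗ D = (map D LinearMap.id + map LinearMap.id D) ∘ₗ Δ

namespace IsDeconcatenation

variable {Δ : TensorModule R V →ₗ[R] TensorModule R V ⊗[R] TensorModule R V}
  (hΔ : IsDeconcatenation Δ)
include hΔ

theorem map_proj_proj_comp (k l : ℕ) :
    map (proj R V k) (proj R V l) ∘ₗ Δ =
      TensorPower.mulEquiv.symm.toLinearMap ∘ₗ proj R V (k + l) := by
  refine linearMap_ext_word fun n u => ?_
  simp only [LinearMap.comp_apply, hΔ n u, map_sum, map_tmul, LinearEquiv.coe_coe]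
  rcases eq_or_ne n (k + l) with rfl | hn
  · rw [Finset.sum_eq_single k, Nat.add_sub_cancel_left, proj_word_self, proj_word_self,
      proj_word_self, TensorPower.mulEquiv_symm_tprod]
    · intro i _ hik
      rw [proj_word_of_ne hik, zero_tmul]
    · simp
  · rw [proj_word_of_ne hn, map_zero]
    refine Finset.sum_eq_zero fun i hi => ?_
    rcases eq_or_ne i k with rfl | hik
    · rw [proj_word_of_ne (m := l) (by have := Finset.mem_range.1 hi; omega), tmul_zero]
    · rw [proj_word_of_ne hik, zero_tmul]

theorem lTensor_proj_zero_comp :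
    (proj R V 0).lTensor (TensorModule R V) ∘ₗ Δ =
      (mk R (TensorModule R V) (⨂[R]^0 V)).flip (PiTensorProduct.tprod R Fin.elim0) := by
  refine linearMap_ext_word fun n u => ?_
  simp only [LinearMap.comp_apply, hΔ n u, map_sum, LinearMap.lTensor_tmul,
    LinearMap.flip_apply, mk_apply]
  rw [Finset.sum_eq_single n, Nat.sub_self, proj_zero_word]
  · intro i hi hin
    rw [proj_word_of_ne (by have := Finset.mem_range.1 hi; omega), tmul_zero]
  · simp

theorem rTensor_proj_zero_comp :
    (proj R V 0).rTensor (TensorModule R V) ∘ₗ Δ =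
      mk R (⨂[R]^0 V) (TensorModule R V) (PiTensorProduct.tprod R Fin.elim0) := by
  refine linearMap_ext_word fun n u => ?_
  simp only [LinearMap.comp_apply, hΔ n u, map_sum, LinearMap.rTensor_tmul, mk_apply]
  rw [Finset.sum_eq_single 0, proj_zero_word,
    word_congr (Nat.sub_zero n) fun i _ => by rw [Nat.zero_add]]
  · intro i _ hi
    rw [proj_word_of_ne hi, zero_tmul]
  · simp

end IsDeconcatenation

namespace IsCoderivation

variable {Δ : TensorModule R V →ₗ[R] TensorModule R V ⊗[R] TensorModule R V}
  {D : TensorModule R V →ₗ[R] TensorModule R V}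

theorem proj_add_comp (hΔ : IsDeconcatenation Δ) (hD : IsCoderivation Δ D) (k l : ℕ) :
    proj R V (k + l) ∘ₗ D = TensorPower.mulEquiv.toLinearMap ∘ₗ
      (map (proj R V k ∘ₗ D) (proj R V l) + map (proj R V k) (proj R V l ∘ₗ D)) ∘ₗ Δ := by
  have h : TensorPower.mulEquiv.symm.toLinearMap ∘ₗ proj R V (k + l) ∘ₗ D =
      (map (proj R V k ∘ₗ D) (proj R V l) + map (proj R V k) (proj R V l ∘ₗ D)) ∘ₗ Δ := by
    rw [← LinearMap.comp_assoc, ← hΔ.map_proj_proj_comp, LinearMap.comp_assoc, hD,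
      ← LinearMap.comp_assoc, LinearMap.comp_add, ← map_comp, ← map_comp]
    rfl
  rw [← h, ← LinearMap.comp_assoc, ← LinearEquiv.coe_trans, LinearEquiv.symm_trans_self]
  rfl

theorem proj_zero_comp (hΔ : IsDeconcatenation Δ) (hD : IsCoderivation Δ D) :
    proj R V 0 ∘ₗ D = 0 := by
  have h := hD.proj_add_comp hΔ 0 0
  rw [LinearMap.add_comp, ← LinearMap.rTensor_comp_lTensor, ← LinearMap.lTensor_comp_rTensor,
    LinearMap.comp_assoc, LinearMap.comp_assoc,
    hΔ.lTensor_proj_zero_comp, hΔ.rTensor_proj_zero_comp] at h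
  refine LinearMap.ext fun x => ?_
  have hx := LinearMap.congr_fun h x
  simp only [LinearMap.comp_apply, LinearMap.add_apply, LinearMap.flip_apply, mk_apply,
    LinearMap.rTensor_tmul, LinearMap.lTensor_tmul, map_add, LinearEquiv.coe_coe,
    TensorPower.mulEquiv_tmul_tprod_elim0, TensorPower.mulEquiv_tprod_elim0_tmul] at hx
  simpa using hx

theorem ext_of_tmProj₁_comp (hΔ : IsDeconcatenation Δ)
    {D₁ D₂ : TensorModule R V →ₗ[R] TensorModule R V}
    (h₁ : IsCoderivation Δ D₁) (h₂ : IsCoderivation Δ D₂)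
    (h : tmProj₁ R V ∘ₗ D₁ = tmProj₁ R V ∘ₗ D₂) : D₁ = D₂ := by
  have hproj : ∀ m, proj R V m ∘ₗ D₁ = proj R V m ∘ₗ D₂ := by
    intro m
    induction m using Nat.strong_induction_on with
    | _ m ih =>
      match m with
      | 0 => rw [h₁.proj_zero_comp hΔ, h₂.proj_zero_comp hΔ]
      | 1 => exact LinearMap.ext fun x =>
          (PiTensorProduct.subsingletonEquiv 0).injective (LinearMap.congr_fun h x)
      | l + 2 =>
        rw [show l + 2 = 1 + (l + 1) by omega, h₁.proj_add_comp hΔ, h₂.proj_add_comp hΔ,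
          ih 1 (by omega), ih (l + 1) (by omega)]
  exact LinearMap.ext fun x =>
    DirectSum.ext_component R fun m => LinearMap.congr_fun (hproj m) x

end IsCoderivation

section LiftCoderivation

variable (β : TensorModule R V →ₗ[R] V)

/-- The word `u₀ ⋯ u_{a-1} β(u_a ⋯ u_{n-c-1}) u_{n-c} ⋯ u_{n-1}`, read on `[0, a + 1 + c)`. -/
noncomputable def coderivWord (n : ℕ) (u : ℕ → V) (a c : ℕ) : ℕ → V := fun t =>
  if t < a then u t
  else if t = a then β (word R (n - a - c) fun j => u (a + j))
  else u (n - c + (t - (a + 1)))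

noncomputable def coderivTerm (n : ℕ) (u : ℕ → V) (a c : ℕ) : TensorModule R V :=
  word R (a + 1 + c) (coderivWord β n u a c)

/-- `id^{⊗a} ⊗ β ⊗ id^{⊗c}`, with `β` applied to the middle factor `V^{⊗m}`. -/
noncomputable def middleMap (a m c : ℕ) : ⨂[R]^(a + m + c) V →ₗ[R] ⨂[R]^(a + 1 + c) V :=
  TensorPower.mulEquiv.toLinearMap ∘ₗ
    (TensorPower.mulEquiv.toLinearMap ∘ₗ
      ((PiTensorProduct.subsingletonEquiv 0).symm.toLinearMap ∘ₗ β ∘ₗ tmOf R V m).lTensor _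
      ).rTensor _ ∘ₗ
    TensorPower.mulEquiv.symm.toLinearMap.rTensor _ ∘ₗ TensorPower.mulEquiv.symm.toLinearMap

theorem middleMap_tprod (a m c : ℕ) (u : ℕ → V) :
    middleMap β a m c (PiTensorProduct.tprod R fun i : Fin (a + m + c) => u i) =
      PiTensorProduct.tprod R (Fin.append (Fin.append (fun i : Fin a => u i)
        fun _ : Fin 1 => β (word R m fun j => u (a + j))) fun j : Fin c => u (a + m + j)) := by
  simp only [middleMap, LinearMap.comp_apply, LinearEquiv.coe_coe,
    TensorPower.mulEquiv_symm_tprod, LinearMap.rTensor_tmul, LinearMap.lTensor_tmul,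
    PiTensorProduct.subsingletonEquiv_symm_apply', TensorPower.mulEquiv_tprod_tmul]
  rfl

theorem coderivWord_eq_append {n a c : ℕ} (h : a + c ≤ n) (u : ℕ → V) :
    (fun t : Fin (a + 1 + c) => coderivWord β n u a c t) =
      Fin.append (Fin.append (fun i : Fin a => u i)
        fun _ : Fin 1 => β (word R (n - a - c) fun j => u (a + j)))
          fun j : Fin c => u (a + (n - a - c) + j) := by
  funext t
  refine Fin.addCases (fun t => ?_) (fun j => ?_) t
  · refine Fin.addCases (fun i => ?_) (fun i => ?_) t
    · simp [coderivWord]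
    · simp [coderivWord, Fin.fin_one_eq_zero i]
  · simp only [Fin.append_right, coderivWord, Fin.val_natAdd]
    rw [if_neg (by omega), if_neg (by omega)]
    congr 1
    omega

noncomputable def coderivComponent (n a c : ℕ) : ⨂[R]^n V →ₗ[R] TensorModule R V :=
  if h : a + c ≤ n then
    tmOf R V (a + 1 + c) ∘ₗ middleMap β a (n - a - c) c ∘ₗ
      (TensorPower.cast R V (by omega : n = a + (n - a - c) + c)).toLinearMap
  else 0

theorem coderivComponent_tprod {n a c : ℕ} (h : a + c ≤ n) (u : ℕ → V) :
    coderivComponent β n a c (PiTensorProduct.tprod R fun i : Fin n => u i) =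
      coderivTerm β n u a c := by
  rw [coderivComponent, dif_pos h, LinearMap.comp_apply, LinearMap.comp_apply,
    LinearEquiv.coe_coe, TensorPower.cast_tprod]
  exact (congrArg (tmOf R V _) (middleMap_tprod β a _ c u)).trans
    (congrArg (tmOf R V _ ∘ PiTensorProduct.tprod R) (coderivWord_eq_append β h u).symm)

noncomputable def liftCoderivation : TensorModule R V →ₗ[R] TensorModule R V :=
  DirectSum.toModule R ℕ _ fun n => ∑ p ∈ boundedPairs n, coderivComponent β n p.1 p.2

theorem liftCoderivation_word (n : ℕ) (u : ℕ → V) :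
    liftCoderivation β (word R n u) = ∑ p ∈ boundedPairs n, coderivTerm β n u p.1 p.2 := by
  rw [liftCoderivation, word, tmOf, DirectSum.toModule_lof, LinearMap.sum_apply]
  exact Finset.sum_congr rfl fun p hp => coderivComponent_tprod β (mem_boundedPairs.1 hp) u

theorem tmProj₁_comp_liftCoderivation : tmProj₁ R V ∘ₗ liftCoderivation β = β := by
  refine linearMap_ext_word fun n u => ?_
  rw [LinearMap.comp_apply, liftCoderivation_word, map_sum, Finset.sum_eq_single (0, 0)]
  · refine (tmProj₁_word_one _).trans ?_
    simp only [coderivWord, lt_irrefl, if_false, if_true]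
    exact congrArg β (word_congr (by omega) fun i _ => by rw [Nat.zero_add])
  · intro p _ hp
    exact tmProj₁_word_of_ne (fun h => hp (Prod.ext (by omega) (by omega))) _
  · simp [mem_boundedPairs]

variable {n a c : ℕ} {u : ℕ → V}

theorem coderivWord_of_lt {t : ℕ} (ht : t < a) : coderivWord β n u a c t = u t :=
  if_pos ht

theorem coderivWord_of_gt {t : ℕ} (ht : a < t) :
    coderivWord β n u a c t = u (n - c + (t - (a + 1))) := by
  rw [coderivWord, if_neg (by omega), if_neg (by omega)]

theorem coderivWord_add {s : ℕ} (h : a + c ≤ n) (hs : s ≤ a) (t : ℕ) :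
    coderivWord β n u a c (s + t) = coderivWord β (n - s) (fun j => u (s + j)) (a - s) c t := by
  rcases lt_trichotomy t (a - s) with ht | rfl | ht
  · rw [coderivWord_of_lt β (by omega), coderivWord_of_lt β ht]
  · rw [coderivWord, if_neg (by omega), if_pos (by omega), coderivWord, if_neg (by omega),
      if_pos rfl]
    exact congrArg β (word_congr (by omega) fun j _ => congrArg u (by omega))
  · rw [coderivWord_of_gt β (by omega), coderivWord_of_gt β ht]
    exact congrArg u (by omega)

theorem coderivWord_eq_sub_add (d t : ℕ) :
    coderivWord β n u a c t = coderivWord β (n - c + d) u a d t := by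
  rcases lt_trichotomy t a with ht | rfl | ht
  · rw [coderivWord_of_lt β ht, coderivWord_of_lt β ht]
  · rw [coderivWord, if_neg (lt_irrefl t), if_pos rfl, coderivWord, if_neg (lt_irrefl t),
      if_pos rfl]
    exact congrArg β (word_congr (by omega) fun j _ => rfl)
  · rw [coderivWord_of_gt β ht, coderivWord_of_gt β ht]
    exact congrArg u (by omega)

variable {Δ : TensorModule R V →ₗ[R] TensorModule R V ⊗[R] TensorModule R V}

theorem IsDeconcatenation.apply_coderivTerm (hΔ : IsDeconcatenation Δ) (h : a + c ≤ n) :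
    Δ (coderivTerm β n u a c) =
      ∑ s ∈ Finset.range (a + 1),
        word R s u ⊗ₜ[R] coderivTerm β (n - s) (fun j => u (s + j)) (a - s) c +
      ∑ d ∈ Finset.range (c + 1),
        coderivTerm β (n - c + d) u a d ⊗ₜ[R] word R (c - d) fun j => u (n - c + d + j) := by
  rw [coderivTerm, hΔ, show a + 1 + c + 1 = (a + 1) + (c + 1) by omega, Finset.sum_range_add]
  congr 1
  · refine Finset.sum_congr rfl fun s hs => ?_
    have hs : s ≤ a := Nat.lt_succ_iff.1 (Finset.mem_range.1 hs)
    congr 1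
    · exact word_congr rfl fun t ht => coderivWord_of_lt β (by omega)
    · exact word_congr (by omega) fun t _ => coderivWord_add β h hs t
  · refine Finset.sum_congr rfl fun d hd => ?_
    have hd : d ≤ c := Nat.lt_succ_iff.1 (Finset.mem_range.1 hd)
    congr 1
    · exact word_congr rfl fun t _ => coderivWord_eq_sub_add β d t
    · exact word_congr (by omega) fun t _ =>
        (coderivWord_of_gt β (by omega)).trans (congrArg u (by omega))

theorem isCoderivation_liftCoderivation (hΔ : IsDeconcatenation Δ) :
    IsCoderivation Δ (liftCoderivation β) := by
  refine linearMap_ext_word fun n u => ?_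
  calc Δ (liftCoderivation β (word R n u))
      = ∑ p ∈ boundedPairs n, ∑ s ∈ Finset.range (p.1 + 1), word R s u ⊗ₜ[R]
            coderivTerm β (n - s) (fun j => u (s + j)) (p.1 - s) p.2 +
        ∑ p ∈ boundedPairs n, ∑ d ∈ Finset.range (p.2 + 1),
          coderivTerm β (n - p.2 + d) u p.1 d ⊗ₜ[R]
            word R (p.2 - d) (fun j => u (n - p.2 + d + j)) := by
        rw [liftCoderivation_word, map_sum, ← Finset.sum_add_distrib]
        exact Finset.sum_congr rfl fun p hp =>
          hΔ.apply_coderivTerm β (mem_boundedPairs.1 hp)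
    _ = ∑ i ∈ Finset.range (n + 1),
          word R i u ⊗ₜ[R] liftCoderivation β (word R (n - i) fun j => u (i + j)) +
        ∑ i ∈ Finset.range (n + 1),
          liftCoderivation β (word R i u) ⊗ₜ[R] word R (n - i) fun j => u (i + j) := by
        simp only [liftCoderivation_word, tmul_sum, sum_tmul]
        rw [sum_boundedPairs_sum_range_fst n fun a c s => word R s u ⊗ₜ[R]
            coderivTerm β (n - s) (fun j => u (s + j)) (a - s) c,
          sum_boundedPairs_sum_range_snd n fun a c d => coderivTerm β (n - c + d) u a d ⊗ₜ[R]
            word R (c - d) fun j => u (n - c + d + j)]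
        congr 1
        · refine Finset.sum_congr rfl fun i _ => Finset.sum_congr rfl fun q _ => ?_
          rw [Nat.add_sub_cancel_left]
        · refine Finset.sum_congr rfl fun i hi => Finset.sum_congr rfl fun q hq => ?_
          have hi : i ≤ n := Nat.lt_succ_iff.1 (Finset.mem_range.1 hi)
          have hq : q.2 ≤ i := by have := mem_boundedPairs.1 hq; omega
          rw [show n - (n - i + q.2) + q.2 = i by omega, Nat.add_sub_cancel]
    _ = _ := by
        simp only [LinearMap.comp_apply, LinearMap.add_apply, hΔ n u, map_sum, map_tmul,
          LinearMap.id_apply]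
        rw [Finset.sum_add_distrib, add_comm]

end LiftCoderivation

end TensorModule

/-- Universal property of the tensor coalgebra `(T(V), Δ)` (with the deconcatenation
coproduct `Δ`) for coderivations: every linear map `β : T(V) → V` extends to a unique
coderivation `D : T(V) → T(V)` (i.e. `Δ ∘ D = (D ⊗ id + id ⊗ D) ∘ Δ`) with
`p₁ ∘ D = β`; hence `D ↦ p₁ ∘ D` is a bijection from coderivations onto linear maps
`T(V) → V`. -/
theorem tensor_coalgebra_coderivation_universal {R V : Type} [CommRing R]
    [AddCommGroup V] [Module R V]
    (Δ : TensorModule R V →ₗ[R] TensorModule R V ⊗[R] TensorModule R V)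
    (hΔ : ∀ (n : ℕ) (v : ℕ → V),
      Δ (tmOf R V n (PiTensorProduct.tprod R (fun i : Fin n => v i.val))) =
        ∑ i ∈ Finset.range (n + 1),
          (tmOf R V i (PiTensorProduct.tprod R (fun j : Fin i => v j.val))) ⊗ₜ[R]
            (tmOf R V (n - i) (PiTensorProduct.tprod R (fun j : Fin (n - i) => v (i + j.val)))))
    (β : TensorModule R V →ₗ[R] V) :
    ∃! D : TensorModule R V →ₗ[R] TensorModule R V,
      Δ.comp D =
        (TensorProduct.map D LinearMap.id + TensorProduct.map LinearMap.id D).comp Δ ∧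
      (tmProj₁ R V).comp D = β := by
  have hΔ' : TensorModule.IsDeconcatenation Δ := hΔ
  have hlift := TensorModule.isCoderivation_liftCoderivation β hΔ'
  have hproj := TensorModule.tmProj₁_comp_liftCoderivation β
  refine ⟨TensorModule.liftCoderivation β, ⟨hlift, hproj⟩, fun D hD => ?_⟩
  exact TensorModule.IsCoderivation.ext_of_tmProj₁_comp hΔ' hD.1 hlift (hD.2.trans hproj.symm)
end

section
/- Hirsch formula for Hochschild cochains: for f ∈ C^m(A,A), g ∈ C^n(A,A) and h ∈ C^q(A,A), (f ⌣ g) ∘ h = (f ∘ h) ⌣ g + (−1)^{m(q−1)} f ⌣ (g ∘ h); in particular the operation (−) ∘ h is, up to sign, a derivation of the cup product. -/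
variable {R A : Type} [CommRing R] [Ring A] [Algebra R A]

/-- A Hochschild `n`-cochain, viewed as a function on sequences (only the first `n`
entries of the sequence are relevant). -/
def toC {n : ℕ} (f : MultilinearMap R (fun _ : Fin n => A) A) : (ℕ → A) → A :=
  fun a => f (fun i => a i.val)

/-- The Hochschild differential `δ : C^n(A,A) → C^{n+1}(A,A)`:
`δf(a₁,…,a_{n+1}) = a₁·f(a₂,…,a_{n+1}) + Σ_{i=1}^{n} (−1)^i f(a₁,…,aᵢ·a_{i+1},…,a_{n+1})
 + (−1)^{n+1} f(a₁,…,a_n)·a_{n+1}` (written here with `0`-based indexing). -/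
def hochδ (n : ℕ) (f : (ℕ → A) → A) : (ℕ → A) → A :=
  fun a =>
    a 0 * f (fun i => a (i + 1))
      + ∑ i ∈ Finset.range n, ((-1 : ℤ) ^ (i + 1)) •
          f (fun j => if j < i then a j else if j = i then a i * a (i + 1) else a (j + 1))
      + ((-1 : ℤ) ^ (n + 1)) • (f a * a n)

/-- The cup product of an `m`-cochain and an `n`-cochain:
`(f ⌣ g)(a₁,…,a_{m+n}) = f(a₁,…,a_m) · g(a_{m+1},…,a_{m+n})`. -/
def cup (m n : ℕ) (f g : (ℕ → A) → A) : (ℕ → A) → A :=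
  fun a => f a * g (fun j => a (m + j))

/-- The Gerstenhaber circle product of an `m`-cochain and an `n`-cochain:
`(f ∘ g)(a₁,…,a_{m+n−1}) = Σ_{i=0}^{m−1} (−1)^{i(n−1)}
  f(a₁,…,a_i, g(a_{i+1},…,a_{i+n}), a_{i+n+1},…,a_{m+n−1})`. -/
def circ (m n : ℕ) (f g : (ℕ → A) → A) : (ℕ → A) → A :=
  fun a => ∑ i ∈ Finset.range m, ((-1 : ℤ) ^ (i * (n - 1))) •
    f (fun j => if j < i then a j
        else if j = i then g (fun k => a (i + k))
        else a (j + n - 1))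

/-- Hirsch formula for Hochschild cochains:
`(f ⌣ g) ∘ h = (f ∘ h) ⌣ g + (−1)^{m(q−1)} f ⌣ (g ∘ h)`. -/
theorem hochschild_hirsch_formula (m n q : ℕ) (hm : 1 ≤ m) (hn : 1 ≤ n) (hq : 1 ≤ q)
    (f : MultilinearMap R (fun _ : Fin m => A) A)
    (g : MultilinearMap R (fun _ : Fin n => A) A)
    (h : MultilinearMap R (fun _ : Fin q => A) A) :
    circ (m + n) q (cup m n (toC f) (toC g)) (toC h) =
      cup (m + q - 1) n (circ m q (toC f) (toC h)) (toC g)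
        + ((-1 : ℤ) ^ (m * (q - 1))) •
            cup m (n + q - 1) (toC f) (circ n q (toC g) (toC h)) := by
  funext a
  simp only [circ, cup, toC, Pi.add_apply, Pi.smul_apply]
  rw [Finset.sum_range_add, Finset.sum_mul, Finset.mul_sum, Finset.smul_sum]
  congr 1
  · apply Finset.sum_congr rfl
    intro i hi
    rw [Finset.mem_range] at hi
    rw [smul_mul_assoc]
    congr 2
    apply congrArg
    funext k
    rw [if_neg (by omega), if_neg (by omega)]
    congr 1
    omega
  · apply Finset.sum_congr rfl
    intro i hi
    rw [Finset.mem_range] at hi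
    rw [mul_smul_comm, smul_smul, add_mul, pow_add]
    congr 1
    congr 1
    · apply congrArg
      funext k
      rw [if_pos (by omega)]
    · apply congrArg
      funext k
      by_cases h1 : (k : ℕ) < i
      · rw [if_pos (by omega), if_pos h1]
      · by_cases h2 : (k : ℕ) = i
        · rw [if_neg (by omega), if_pos (by omega), if_neg h1, if_pos h2]
          apply congrArg
          funext t
          congr 1
          omega
        · rw [if_neg (by omega), if_neg (by omega), if_neg h1, if_neg h2]
          congr 1
          omega
end

section
/- Pre-Jacobi (pre-Lie) identity for the Gerstenhaber circle product: for f ∈ C^m(A,A), g ∈ C^n(A,A) and h ∈ C^q(A,A), f ∘ (g ∘ h) − (f ∘ g) ∘ h = (−1)^{(n−1)(q−1)} ( f ∘ (h ∘ g) − (f ∘ h) ∘ g ). -/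
/-!
Expanding `(f ∘ g) ∘ h` inserts `h` into one of the arguments of `f ∘ g`. Those insertions that
land inside the argument of `g` make up exactly `f ∘ (g ∘ h)`; the others put `g` and `h` into two
distinct arguments of `f`, giving the brace `f{g, h}` (when `h` lands to the right of `g`) or, up to
the sign `(-1)^((n-1)(q-1))`, the brace `f{h, g}`. Hence the associator
`(f ∘ g) ∘ h - f ∘ (g ∘ h) = f{g, h} + (-1)^((n-1)(q-1)) f{h, g}`
is graded-symmetric in `g` and `h`, which is the pre-Jacobi identity.
-/

variable {R A : Type} [CommRing R] [Ring A] [Algebra R A]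

open Finset

section Insertion

variable {α : Type*}

def insertAt (w : ℕ) (G : (ℕ → α) → α) (i : ℕ) (a : ℕ → α) : ℕ → α :=
  fun j => if j < i then a j else if j = i then G (fun k => a (i + k)) else a (j + w - 1)

/-- `G` (arity `w₁`) and `H` (arity `w₂`) inserted into `a` at the positions `u < v` of the
resulting sequence. -/
def insertPair (w₁ w₂ : ℕ) (G H : (ℕ → α) → α) (u v : ℕ) (a : ℕ → α) : ℕ → α := fun j =>
  if j < u then a j
  else if j = u then G (fun k => a (u + k))
  else if j < v then a (j + w₁ - 1)
  else if j = v then H (fun k => a (v + w₁ - 1 + k))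
  else a (j + w₁ + w₂ - 2)

theorem insertAt_insertAt_left {n q p i : ℕ} (hpi : p < i) (G H : (ℕ → α) → α) (a : ℕ → α) :
    insertAt n G i (insertAt q H p a) = insertPair q n H G p i a := by
  funext j
  simp only [insertAt, insertPair]
  split_ifs <;> first
    | rfl
    | omega
    | (congr 1; omega)
    | (congr 1; funext k; split_ifs <;> first | omega | (congr 1; omega))

theorem insertAt_insertAt_inside {n q i l : ℕ} (hl : l < n) (G H : (ℕ → α) → α) (a : ℕ → α) :
    insertAt n G i (insertAt q H (i + l) a) =
      insertAt (n + q - 1) (fun b => G (insertAt q H l b)) i a := by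
  funext j
  simp only [insertAt]
  split_ifs <;> first
    | rfl
    | omega
    | (congr 1; omega)
    | (congr 1; funext k; simp only [insertAt]
       split_ifs <;> first | rfl | omega | (congr 1; omega) | (congr 1; funext k'; congr 1; omega))

theorem insertAt_insertAt_right {n q i v : ℕ} (hiv : i < v) {G : (ℕ → α) → α}
    (hG : ∀ x y : ℕ → α, (∀ k < n, x k = y k) → G x = G y) (H : (ℕ → α) → α) (a : ℕ → α) :
    insertAt n G i (insertAt q H (v + n - 1) a) = insertPair n q G H i v a := by
  funext j
  simp only [insertAt, insertPair]
  split_ifs <;> first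
    | rfl
    | omega
    | (congr 1; omega)
    | (apply hG; intro k hk; split_ifs <;> first | rfl | omega)

end Insertion

theorem neg_one_pow_add_two_mul (a b : ℕ) : (-1 : ℤ) ^ (a + 2 * b) = (-1) ^ a := by
  rw [pow_add, pow_mul, neg_one_sq, one_pow, mul_one]

theorem sum_range_eq_around_block {M : Type*} [AddCommMonoid M] (F : ℕ → M) {i m : ℕ}
    (hi : i < m) (n : ℕ) :
    ∑ p ∈ range (m + n - 1), F p =
      ∑ p ∈ range i, F p + ∑ l ∈ range n, F (i + l) + ∑ v ∈ Ico (i + 1) m, F (v + n - 1) := by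
  rw [show m + n - 1 = i + (n + (m - (i + 1))) by omega, sum_range_add, sum_range_add,
    sum_Ico_eq_sum_range, ← add_assoc]
  congr 2 with t
  congr 1
  omega

theorem circ_eq_sum (m w : ℕ) (F G : (ℕ → A) → A) :
    circ m w F G = fun a => ∑ i ∈ range m, (-1 : ℤ) ^ (i * (w - 1)) • F (insertAt w G i a) :=
  rfl

theorem toC_congr {n : ℕ} (f : MultilinearMap R (fun _ : Fin n => A) A) {x y : ℕ → A}
    (hxy : ∀ k < n, x k = y k) : toC f x = toC f y :=
  congrArg f (funext fun k => hxy k k.isLt)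

theorem toC_insertAt_sum {m : ℕ} (f : MultilinearMap R (fun _ : Fin m => A) A) {i : ℕ}
    (hi : i < m) (w : ℕ) {ι : Type*} (s : Finset ι) (c : ι → ℤ) (G : ι → (ℕ → A) → A)
    (a : ℕ → A) :
    toC f (insertAt w (fun b => ∑ l ∈ s, c l • G l b) i a) =
      ∑ l ∈ s, c l • toC f (insertAt w (G l) i a) := by
  classical
  let v : Fin m → A := fun j => if (j : ℕ) < i then a j else a (j + w - 1)
  have slot : ∀ G : (ℕ → A) → A,
      toC f (insertAt w G i a) = f.toLinearMap v ⟨i, hi⟩ (G fun k => a (i + k)) := by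
    intro G
    rw [MultilinearMap.toLinearMap_apply]
    refine congrArg f (funext fun j => ?_)
    rcases eq_or_ne j ⟨i, hi⟩ with rfl | hj
    · simp [insertAt]
    · have hj' : (j : ℕ) ≠ i := fun h => hj (Fin.ext h)
      simp [insertAt, v, Function.update_of_ne hj, hj']
  simp only [slot, map_sum, map_zsmul]

/-- The brace `F{G, H}`, with `G` of arity `n` and `H` of arity `q` inserted into two distinct
arguments of `F`, `G` to the left of `H`. Each inserted cochain contributes the sign
`(-1)^((position of its first argument) * (arity - 1))`. -/
def brace (m n q : ℕ) (F G H : (ℕ → A) → A) : (ℕ → A) → A := fun a =>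
  ∑ v ∈ range m, ∑ u ∈ range v,
    (-1 : ℤ) ^ (u * (n - 1) + (v + n - 1) * (q - 1)) • F (insertPair n q G H u v a)

theorem circ_circ_apply_eq_sum (m n q : ℕ) (F G H : (ℕ → A) → A) (a : ℕ → A) :
    circ (m + n - 1) q (circ m n F G) H a =
      ∑ i ∈ range m, ∑ p ∈ range (m + n - 1),
        (-1 : ℤ) ^ (p * (q - 1) + i * (n - 1)) • F (insertAt n G i (insertAt q H p a)) := by
  simp only [circ_eq_sum, smul_sum, smul_smul, ← pow_add]
  exact sum_comm

theorem circ_apply_circ_eq_sum {m n q : ℕ} (hn : 1 ≤ n) (hq : 1 ≤ q)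
    (f : MultilinearMap R (fun _ : Fin m => A) A) (G H : (ℕ → A) → A) (a : ℕ → A) :
    circ m (n + q - 1) (toC f) (circ n q G H) a =
      ∑ i ∈ range m, ∑ l ∈ range n, (-1 : ℤ) ^ ((i + l) * (q - 1) + i * (n - 1)) •
        toC f (insertAt n G i (insertAt q H (i + l) a)) := by
  simp only [circ_eq_sum]
  refine sum_congr rfl fun i hi => ?_
  rw [toC_insertAt_sum f (mem_range.mp hi), smul_sum]
  refine sum_congr rfl fun l hl => ?_
  rw [smul_smul, ← pow_add, insertAt_insertAt_inside (mem_range.mp hl),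
    show n + q - 1 - 1 = (n - 1) + (q - 1) by omega]
  ring_nf

theorem sum_sum_insertAt_left_eq_brace (m : ℕ) {n q : ℕ} (hq : 1 ≤ q) (F G H : (ℕ → A) → A)
    (a : ℕ → A) :
    ∑ i ∈ range m, ∑ p ∈ range i,
        (-1 : ℤ) ^ (p * (q - 1) + i * (n - 1)) • F (insertAt n G i (insertAt q H p a)) =
      (-1 : ℤ) ^ ((n - 1) * (q - 1)) • brace m q n F H G a := by
  simp only [brace, smul_sum, smul_smul, ← pow_add]
  refine sum_congr rfl fun i _ => sum_congr rfl fun p hp => ?_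
  rw [insertAt_insertAt_left (mem_range.mp hp),
    ← neg_one_pow_add_two_mul (p * (q - 1) + i * (n - 1)) ((n - 1) * (q - 1)),
    show i + q - 1 = i + (q - 1) by omega]
  ring_nf

theorem sum_sum_insertAt_right_eq_brace {m n : ℕ} (q : ℕ)
    (f : MultilinearMap R (fun _ : Fin m => A) A) (g : MultilinearMap R (fun _ : Fin n => A) A)
    (H : (ℕ → A) → A) (a : ℕ → A) :
    ∑ i ∈ range m, ∑ v ∈ Ico (i + 1) m, (-1 : ℤ) ^ ((v + n - 1) * (q - 1) + i * (n - 1)) •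
        toC f (insertAt n (toC g) i (insertAt q H (v + n - 1) a)) =
      brace m n q (toC f) (toC g) H a := by
  simp only [brace, range_eq_Ico, ← sum_Ico_Ico_comm']
  refine sum_congr rfl fun i _ => sum_congr rfl fun v hv => ?_
  rw [insertAt_insertAt_right (mem_Ico.mp hv).1 (fun _ _ => toC_congr g), add_comm]

theorem circ_circ_eq_add_brace {m n q : ℕ} (hn : 1 ≤ n) (hq : 1 ≤ q)
    (f : MultilinearMap R (fun _ : Fin m => A) A) (g : MultilinearMap R (fun _ : Fin n => A) A)
    (H : (ℕ → A) → A) :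
    circ (m + n - 1) q (circ m n (toC f) (toC g)) H =
      circ m (n + q - 1) (toC f) (circ n q (toC g) H) + brace m n q (toC f) (toC g) H +
        (-1 : ℤ) ^ ((n - 1) * (q - 1)) • brace m q n (toC f) H (toC g) := by
  funext a
  rw [Pi.add_apply, Pi.add_apply, Pi.smul_apply, circ_circ_apply_eq_sum,
    circ_apply_circ_eq_sum hn hq, ← sum_sum_insertAt_left_eq_brace m hq,
    ← sum_sum_insertAt_right_eq_brace q f g,
    sum_congr rfl fun i hi => sum_range_eq_around_block _ (mem_range.mp hi) n]
  simp only [sum_add_distrib]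
  abel

theorem gerstenhaber_pre_jacobi_general (m n q : ℕ) (hn : 1 ≤ n) (hq : 1 ≤ q)
    (f : MultilinearMap R (fun _ : Fin m => A) A)
    (g : MultilinearMap R (fun _ : Fin n => A) A)
    (h : MultilinearMap R (fun _ : Fin q => A) A) :
    circ m (n + q - 1) (toC f) (circ n q (toC g) (toC h))
        - circ (m + n - 1) q (circ m n (toC f) (toC g)) (toC h) =
      ((-1 : ℤ) ^ ((n - 1) * (q - 1))) •
        (circ m (q + n - 1) (toC f) (circ q n (toC h) (toC g))
          - circ (m + q - 1) n (circ m q (toC f) (toC h)) (toC g)) := by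
  rw [circ_circ_eq_add_brace hn hq f g (toC h), circ_circ_eq_add_brace hq hn f h (toC g),
    mul_comm (q - 1)]
  have sign_sq : ∀ x : (ℕ → A) → A,
      (-1 : ℤ) ^ ((n - 1) * (q - 1)) • (-1 : ℤ) ^ ((n - 1) * (q - 1)) • x = x := by
    intro x
    rw [smul_smul, ← pow_add, ← two_mul, pow_mul, neg_one_sq, one_pow, one_smul]
  rw [smul_sub, smul_add, smul_add, sign_sq]
  abel

/-- Pre-Jacobi (pre-Lie) identity for the Gerstenhaber circle product:
`f ∘ (g ∘ h) − (f ∘ g) ∘ h = (−1)^{(n−1)(q−1)} ( f ∘ (h ∘ g) − (f ∘ h) ∘ g )`. -/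
theorem gerstenhaber_pre_jacobi (m n q : ℕ) (hm : 1 ≤ m) (hn : 1 ≤ n) (hq : 1 ≤ q)
    (f : MultilinearMap R (fun _ : Fin m => A) A)
    (g : MultilinearMap R (fun _ : Fin n => A) A)
    (h : MultilinearMap R (fun _ : Fin q => A) A) :
    circ m (n + q - 1) (toC f) (circ n q (toC g) (toC h))
        - circ (m + n - 1) q (circ m n (toC f) (toC g)) (toC h) =
      ((-1 : ℤ) ^ ((n - 1) * (q - 1))) •
        (circ m (q + n - 1) (toC f) (circ q n (toC h) (toC g))
          - circ (m + q - 1) n (circ m q (toC f) (toC h)) (toC g)) :=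
  gerstenhaber_pre_jacobi_general m n q hn hq f g h
end

section
/- Graded Jacobi identity for the Gerstenhaber bracket: for f ∈ C^m(A,A), g ∈ C^n(A,A) and h ∈ C^q(A,A), (−1)^{(m−1)(q−1)} [[f,g],h] + (−1)^{(n−1)(m−1)} [[g,h],f] + (−1)^{(q−1)(n−1)} [[h,f],g] = 0, where [f,g] = f ∘ g − (−1)^{(m−1)(n−1)} g ∘ f. -/
variable {R A : Type} [CommRing R] [Ring A] [Algebra R A]

/-- The Gerstenhaber bracket of an `m`-cochain and an `n`-cochain:
`[f,g] = f ∘ g − (−1)^{(m−1)(n−1)} g ∘ f`. -/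
def gbr (m n : ℕ) (f g : (ℕ → A) → A) : (ℕ → A) → A :=
  circ m n f g - ((-1 : ℤ) ^ ((m - 1) * (n - 1))) • circ n m g f

namespace GJ

lemma toC_eq {n : ℕ} (f : MultilinearMap R (fun _ : Fin n => A) A) {a b : ℕ → A}
    (h : ∀ i, i < n → a i = b i) : toC f a = toC f b := by
  unfold toC; congr 1; funext i; exact h i i.isLt


open Finset

def insA (i sh : ℕ) (a : ℕ → A) (x : A) : ℕ → A :=
  fun t => if t < i then a t else if t = i then x else a (t + sh)

/-- double insertion: `x` at slot `i`, `y` at slot `k` (`i < k`). -/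
def ins2 (i k sh1 sh2 : ℕ) (a : ℕ → A) (x y : A) : ℕ → A :=
  fun t => if t < i then a t else if t = i then x
    else if t < k then a (t + sh1) else if t = k then y else a (t + sh2)

/-- the sequence obtained by inserting `H(a_j, a_{j+1}, …)` at slot `j`, shift `Q`. -/
def bpat (Q : ℕ) (H : (ℕ → A) → A) (a : ℕ → A) (j : ℕ) : ℕ → A :=
  fun u => if u < j then a u else if u = j then H (fun s => a (j + s)) else a (u + Q)

/-- the "disjoint insertions" part of `(F ∘ G) ∘ H`. -/
def Dd (M N Q : ℕ) (F G H : (ℕ → A) → A) : (ℕ → A) → A := fun a =>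
  (∑ i ∈ Finset.range (M + 1), ∑ r ∈ Finset.range (M - i),
      ((-1 : ℤ)) ^ (i * N + (i + 1 + r + N) * Q) •
        F (ins2 i (i + 1 + r) N (N + Q) a (G fun s => a (i + s)) (H fun s => a (i + 1 + r + N + s))))
  + (∑ i ∈ Finset.range (M + 1), ∑ j ∈ Finset.range i,
      ((-1 : ℤ)) ^ (j * Q + i * N) •
        F (ins2 j i Q (N + Q) a (H fun s => a (j + s)) (G fun s => a (i + Q + s))))

-- check defeq facts
example (M N Q : ℕ) (F G H : (ℕ → A) → A) (a : ℕ → A) :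
    circ (M + N + 1) (Q + 1) (circ (M + 1) (N + 1) F G) H a
      = ∑ j ∈ Finset.range (M + N + 1), ((-1 : ℤ)) ^ (j * Q) •
          ∑ i ∈ Finset.range (M + 1), ((-1 : ℤ)) ^ (i * N) •
            F (fun t => if t < i then bpat Q H a j t
              else if t = i then G (fun k => bpat Q H a j (i + k))
              else bpat Q H a j (t + N)) := rfl

example (M N Q : ℕ) (F K : (ℕ → A) → A) (a : ℕ → A) :
    circ (M + 1) (N + Q + 1) F K a
      = ∑ i ∈ Finset.range (M + 1), ((-1 : ℤ)) ^ (i * (N + Q)) •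
          F (insA i (N + Q) a (K (fun k => a (i + k)))) := rfl

example (N Q : ℕ) (G H : (ℕ → A) → A) (a : ℕ → A) (i : ℕ) :
    circ (N + 1) (Q + 1) G H (fun k => a (i + k))
      = ∑ l ∈ Finset.range (N + 1), ((-1 : ℤ)) ^ (l * Q) •
          G (fun s => if s < l then a (i + s)
            else if s = l then H (fun r => a (i + (l + r)))
            else a (i + (s + Q))) := rfl

end GJ

namespace GJ

lemma toC_insA_sum {n : ℕ} (f : MultilinearMap R (fun _ : Fin n => A) A)
    {i : ℕ} (hi : i < n) (sh : ℕ) (a : ℕ → A) {ι : Type} (s : Finset ι) (c : ι → ℤ) (v : ι → A) :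
    toC f (insA i sh a (∑ l ∈ s, c l • v l)) = ∑ l ∈ s, c l • toC f (insA i sh a (v l)) := by
  set base := fun t : Fin n => insA i sh a 0 t.val with hbase
  let φ : A →+ A := AddMonoidHom.mk' (fun x => f (Function.update base ⟨i, hi⟩ x))
    (fun x y => f.map_update_add base ⟨i, hi⟩ x y)
  have hφ : ∀ x, toC f (insA i sh a x) = φ x := fun x => by
    unfold toC
    show f _ = f (Function.update base ⟨i, hi⟩ x)
    congr 1
    funext t
    rcases eq_or_ne t (⟨i, hi⟩ : Fin n) with rfl | ht
    · simp [insA, base]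
    · have hne : (t : ℕ) ≠ i := fun hh => ht (Fin.ext hh)
      rw [Function.update_of_ne ht]
      simp [insA, base, hne]
  rw [hφ, map_sum]
  refine Finset.sum_congr rfl fun l _ => ?_
  rw [map_zsmul, hφ]



lemma toC_insA_sub_zsmul {n : ℕ} (f : MultilinearMap R (fun _ : Fin n => A) A)
    {i : ℕ} (hi : i < n) (sh : ℕ) (a : ℕ → A) (x y : A) (z : ℤ) :
    toC f (insA i sh a (x - z • y))
      = toC f (insA i sh a x) - z • toC f (insA i sh a y) := by
  set base := fun t : Fin n => insA i sh a 0 t.val with hbase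
  let φ : A →+ A := AddMonoidHom.mk' (fun x => f (Function.update base ⟨i, hi⟩ x))
    (fun x y => f.map_update_add base ⟨i, hi⟩ x y)
  have hφ : ∀ x, toC f (insA i sh a x) = φ x := fun x => by
    unfold toC
    show f _ = f (Function.update base ⟨i, hi⟩ x)
    congr 1
    funext t
    rcases eq_or_ne t (⟨i, hi⟩ : Fin n) with rfl | ht
    · simp [insA, base]
    · have hne : (t : ℕ) ≠ i := fun hh => ht (Fin.ext hh)
      rw [Function.update_of_ne ht]
      simp [insA, base, hne]
  rw [hφ, map_sub, map_zsmul, hφ, hφ]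

lemma sum_range_add' {β : Type} [AddCommMonoid β] (u : ℕ → β) (p r : ℕ) :
    ∑ j ∈ Finset.range (p + r), u j
      = (∑ j ∈ Finset.range p, u j) + ∑ j ∈ Finset.range r, u (p + j) := by
  induction r with
  | zero => simp
  | succ r ih =>
      rw [show p + (r + 1) = (p + r) + 1 from rfl, Finset.sum_range_succ, ih,
        Finset.sum_range_succ, add_assoc]

lemma prelie (M N Q : ℕ) (f : MultilinearMap R (fun _ : Fin (M + 1) => A) A)
    (G H : (ℕ → A) → A)
    (hG : ∀ a b : ℕ → A, (∀ s, s < N + 1 → a s = b s) → G a = G b) :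
    circ (M + N + 1) (Q + 1) (circ (M + 1) (N + 1) (toC f) G) H
      = circ (M + 1) (N + Q + 1) (toC f) (circ (N + 1) (Q + 1) G H) + Dd M N Q (toC f) G H := by
  funext a
  have e0 : circ (M + N + 1) (Q + 1) (circ (M + 1) (N + 1) (toC f) G) H a
      = ∑ j ∈ Finset.range (M + N + 1), ∑ i ∈ Finset.range (M + 1),
          ((-1 : ℤ)) ^ (j * Q) • (((-1 : ℤ)) ^ (i * N) •
            toC f (fun t => if t < i then bpat Q H a j t
              else if t = i then G (fun k => bpat Q H a j (i + k))
              else bpat Q H a j (t + N))) :=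
    Finset.sum_congr rfl fun j _ => Finset.smul_sum
  rw [show (circ (M + N + 1) (Q + 1) (circ (M + 1) (N + 1) (toC f) G) H) a
        = _ from e0.trans Finset.sum_comm]
  show _ = circ (M + 1) (N + Q + 1) (toC f) (circ (N + 1) (Q + 1) G H) a + Dd M N Q (toC f) G H a
  rw [show circ (M + 1) (N + Q + 1) (toC f) (circ (N + 1) (Q + 1) G H) a
      = ∑ i ∈ Finset.range (M + 1), ((-1 : ℤ)) ^ (i * (N + Q)) •
          toC f (insA i (N + Q) a (circ (N + 1) (Q + 1) G H (fun k => a (i + k)))) from rfl]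
  simp only [Dd]
  rw [← Finset.sum_add_distrib, ← Finset.sum_add_distrib]
  refine Finset.sum_congr rfl fun i hi => ?_
  have hiM : i < M + 1 := Finset.mem_range.1 hi
  rw [show M + N + 1 = i + ((N + 1) + (M - i)) from by omega, sum_range_add', sum_range_add']
  have hPre : ∑ j ∈ Finset.range i,
      ((-1 : ℤ)) ^ (j * Q) • (((-1 : ℤ)) ^ (i * N) •
        toC f (fun t => if t < i then bpat Q H a j t
          else if t = i then G (fun k => bpat Q H a j (i + k))
          else bpat Q H a j (t + N)))
      = ∑ j ∈ Finset.range i, ((-1 : ℤ)) ^ (j * Q + i * N) •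
          toC f (ins2 j i Q (N + Q) a (H fun s => a (j + s)) (G fun s => a (i + Q + s))) := by
    refine Finset.sum_congr rfl fun j hj => ?_
    have hj' : j < i := Finset.mem_range.1 hj
    rw [smul_smul, ← pow_add]
    congr 1
    refine congrArg (toC f) (funext fun t => ?_)
    simp only [bpat, ins2]
    split_ifs <;> first
      | rfl
      | omega
      | (congr 1; omega)
      | (congr 1; funext k; congr 1; omega)
      | (congr 1; funext k; split_ifs <;> first
          | rfl
          | omega
          | (congr 1; omega)
          | (congr 1; funext s; congr 1; omega))
  have hMid : ∑ l ∈ Finset.range (N + 1),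
      ((-1 : ℤ)) ^ ((i + l) * Q) • (((-1 : ℤ)) ^ (i * N) •
        toC f (fun t => if t < i then bpat Q H a (i + l) t
          else if t = i then G (fun k => bpat Q H a (i + l) (i + k))
          else bpat Q H a (i + l) (t + N)))
      = ((-1 : ℤ)) ^ (i * (N + Q)) •
          toC f (insA i (N + Q) a (circ (N + 1) (Q + 1) G H (fun k => a (i + k)))) := by
    have step1 : ∀ l ∈ Finset.range (N + 1),
        ((-1 : ℤ)) ^ ((i + l) * Q) • (((-1 : ℤ)) ^ (i * N) •
          toC f (fun t => if t < i then bpat Q H a (i + l) t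
            else if t = i then G (fun k => bpat Q H a (i + l) (i + k))
            else bpat Q H a (i + l) (t + N)))
        = ((-1 : ℤ)) ^ (i * (N + Q)) • (((-1 : ℤ)) ^ (l * Q) •
            toC f (insA i (N + Q) a (G (fun s => if s < l then a (i + s)
              else if s = l then H (fun r => a (i + (l + r)))
              else a (i + (s + Q)))))) := by
      intro l hl
      have hl' : l < N + 1 := Finset.mem_range.1 hl
      rw [smul_smul, smul_smul, ← pow_add, ← pow_add,
        show (i + l) * Q + i * N = i * (N + Q) + l * Q from by ring]
      congr 1
      refine congrArg (toC f) (funext fun t => ?_)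
      simp only [bpat, insA]
      split_ifs <;> first
        | rfl
        | omega
        | (congr 1; omega)
        | (congr 1; funext k; congr 1; omega)
        | (congr 1; funext k; split_ifs <;> first
            | rfl
            | omega
            | (congr 1; omega)
            | (congr 1; funext s; congr 1; omega))
    rw [Finset.sum_congr rfl step1, ← Finset.smul_sum]
    congr 1
    rw [← toC_insA_sum f hiM (N + Q) a (Finset.range (N + 1))
      (fun l => ((-1 : ℤ)) ^ (l * Q))
      (fun l => G (fun s => if s < l then a (i + s)
        else if s = l then H (fun r => a (i + (l + r)))
        else a (i + (s + Q))))]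
    rfl
  have hPost : ∑ r ∈ Finset.range (M - i),
      ((-1 : ℤ)) ^ ((i + (N + 1 + r)) * Q) • (((-1 : ℤ)) ^ (i * N) •
        toC f (fun t => if t < i then bpat Q H a (i + (N + 1 + r)) t
          else if t = i then G (fun k => bpat Q H a (i + (N + 1 + r)) (i + k))
          else bpat Q H a (i + (N + 1 + r)) (t + N)))
      = ∑ r ∈ Finset.range (M - i), ((-1 : ℤ)) ^ (i * N + (i + 1 + r + N) * Q) •
          toC f (ins2 i (i + 1 + r) N (N + Q) a (G fun s => a (i + s))
            (H fun s => a (i + 1 + r + N + s))) := by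
    refine Finset.sum_congr rfl fun r hr => ?_
    have hr' : r < M - i := Finset.mem_range.1 hr
    rw [smul_smul, ← pow_add,
      show (i + (N + 1 + r)) * Q + i * N = i * N + (i + 1 + r + N) * Q from by ring]
    congr 1
    refine congrArg (toC f) (funext fun t => ?_)
    simp only [bpat, ins2]
    split_ifs <;> first
      | rfl
      | omega
      | (congr 1; omega)
      | (congr 1; funext k; congr 1; omega)
      | (congr 1; funext k; split_ifs <;> first
          | rfl
          | omega
          | (congr 1; omega)
          | (congr 1; funext s; congr 1; omega))
      | (refine hG _ _ fun s hs => ?_; split_ifs <;> first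
          | rfl
          | omega
          | (congr 1; omega))
  rw [hPre, hMid, hPost]
  abel

end GJ

namespace GJ

lemma tri_sum {β : Type} [AddCommMonoid β] (M : ℕ) (g : ℕ → ℕ → β) :
    ∑ i ∈ Finset.range (M + 1), ∑ r ∈ Finset.range (M - i), g i (i + 1 + r)
      = ∑ k ∈ Finset.range (M + 1), ∑ j ∈ Finset.range k, g j k := by
  have h1 : ∀ i ∈ Finset.range (M + 1),
      ∑ r ∈ Finset.range (M - i), g i (i + 1 + r)
        = ∑ k ∈ Finset.Ico (i + 1) (M + 1), g i k := by
    intro i hi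
    rw [Finset.sum_Ico_eq_sum_range, show M + 1 - (i + 1) = M - i from by omega]
  rw [Finset.sum_congr rfl h1]
  refine Finset.sum_comm' fun x y => ?_
  simp only [Finset.mem_range, Finset.mem_Ico]
  omega

lemma neg_one_pow_add_two_mul (e c : ℕ) : ((-1 : ℤ)) ^ (e + 2 * c) = (-1) ^ e := by
  rw [pow_add, pow_mul, neg_one_sq, one_pow, mul_one]

lemma D_symm (M N Q : ℕ) (F G H : (ℕ → A) → A) :
    Dd M N Q F G H = ((-1 : ℤ)) ^ (N * Q) • Dd M Q N F H G := by
  funext a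
  have h1 := tri_sum M (fun i k => ((-1 : ℤ)) ^ (i * N + (k + N) * Q) •
    F (ins2 i k N (N + Q) a (G fun s => a (i + s)) (H fun s => a (k + N + s))))
  have h2 := tri_sum M (fun i k => ((-1 : ℤ)) ^ (i * Q + (k + Q) * N) •
    F (ins2 i k Q (N + Q) a (H fun s => a (i + s)) (G fun s => a (k + Q + s))))
  simp only [Dd, Pi.smul_apply]
  simp only [show Q + N = N + Q from Nat.add_comm Q N]
  rw [h1, h2, smul_add]
  simp only [Finset.smul_sum]
  rw [add_comm]
  refine congrArg₂ (· + ·) ?_ ?_ <;>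
    refine Finset.sum_congr rfl fun k _ => Finset.sum_congr rfl fun j _ => ?_ <;>
    rw [smul_smul, ← pow_add]
  · rw [show N * Q + (j * Q + (k + Q) * N) = j * Q + k * N + 2 * (N * Q) from by ring,
      neg_one_pow_add_two_mul]
  · rw [show N * Q + (j * N + k * Q) = j * N + (k + N) * Q from by ring]

lemma circ_sub_left (m n : ℕ) (F1 F2 G : (ℕ → A) → A) :
    circ m n (F1 - F2) G = circ m n F1 G - circ m n F2 G := by
  funext a
  simp only [circ, Pi.sub_apply, smul_sub, Finset.sum_sub_distrib]

lemma circ_zsmul_left (m n : ℕ) (z : ℤ) (F G : (ℕ → A) → A) :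
    circ m n (z • F) G = z • circ m n F G := by
  funext a
  simp only [circ, Pi.smul_apply, Finset.smul_sum]
  exact Finset.sum_congr rfl fun i _ => smul_comm _ _ _

lemma circ_right (Qd k : ℕ) (h : MultilinearMap R (fun _ : Fin (Qd + 1) => A) A)
    (K1 K2 : (ℕ → A) → A) (z : ℤ) :
    circ (Qd + 1) (k + 1) (toC h) (K1 - z • K2)
      = circ (Qd + 1) (k + 1) (toC h) K1 - z • circ (Qd + 1) (k + 1) (toC h) K2 := by
  funext a
  show ∑ i ∈ Finset.range (Qd + 1), ((-1 : ℤ)) ^ (i * k) •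
      toC h (insA i k a ((K1 - z • K2) (fun s => a (i + s)))) = _
  have step : ∀ i ∈ Finset.range (Qd + 1),
      ((-1 : ℤ)) ^ (i * k) • toC h (insA i k a ((K1 - z • K2) (fun s => a (i + s))))
        = ((-1 : ℤ)) ^ (i * k) • toC h (insA i k a (K1 (fun s => a (i + s))))
          - z • (((-1 : ℤ)) ^ (i * k) • toC h (insA i k a (K2 (fun s => a (i + s))))) := by
    intro i hi
    rw [Pi.sub_apply, Pi.smul_apply,
      toC_insA_sub_zsmul h (Finset.mem_range.1 hi) k a _ _ z, smul_sub, smul_comm]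
  rw [Finset.sum_congr rfl step, Finset.sum_sub_distrib]
  have e2 : ∑ i ∈ Finset.range (Qd + 1),
      z • (((-1 : ℤ)) ^ (i * k) • toC h (insA i k a (K2 fun s => a (i + s))))
      = z • ∑ i ∈ Finset.range (Qd + 1),
          ((-1 : ℤ)) ^ (i * k) • toC h (insA i k a (K2 fun s => a (i + s))) :=
    (Finset.smul_sum).symm
  rw [e2]
  rfl

end GJ

open GJ in
/-- Graded Jacobi identity for the Gerstenhaber bracket:
`(−1)^{(m−1)(q−1)} [[f,g],h] + (−1)^{(n−1)(m−1)} [[g,h],f] + (−1)^{(q−1)(n−1)} [[h,f],g] = 0`. -/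
theorem gerstenhaber_graded_jacobi (m n q : ℕ) (hm : 1 ≤ m) (hn : 1 ≤ n) (hq : 1 ≤ q)
    (f : MultilinearMap R (fun _ : Fin m => A) A)
    (g : MultilinearMap R (fun _ : Fin n => A) A)
    (h : MultilinearMap R (fun _ : Fin q => A) A) :
    ((-1 : ℤ) ^ ((m - 1) * (q - 1))) • gbr (m + n - 1) q (gbr m n (toC f) (toC g)) (toC h)
        + ((-1 : ℤ) ^ ((n - 1) * (m - 1))) • gbr (n + q - 1) m (gbr n q (toC g) (toC h)) (toC f)
        + ((-1 : ℤ) ^ ((q - 1) * (n - 1))) • gbr (q + m - 1) n (gbr q m (toC h) (toC f)) (toC g)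
      = 0 := by
  obtain ⟨M, rfl⟩ : ∃ M, m = M + 1 := ⟨m - 1, by omega⟩
  obtain ⟨N, rfl⟩ : ∃ N, n = N + 1 := ⟨n - 1, by omega⟩
  obtain ⟨Q, rfl⟩ : ∃ Q, q = Q + 1 := ⟨q - 1, by omega⟩
  have locf : ∀ a b : ℕ → A, (∀ s, s < M + 1 → a s = b s) → toC f a = toC f b :=
    fun a b hab => toC_eq f hab
  have locg : ∀ a b : ℕ → A, (∀ s, s < N + 1 → a s = b s) → toC g a = toC g b :=
    fun a b hab => toC_eq g hab
  have loch : ∀ a b : ℕ → A, (∀ s, s < Q + 1 → a s = b s) → toC h a = toC h b :=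
    fun a b hab => toC_eq h hab
  rw [show M + 1 + (N + 1) - 1 = M + N + 1 from by omega,
      show N + 1 + (Q + 1) - 1 = N + Q + 1 from by omega,
      show Q + 1 + (M + 1) - 1 = Q + M + 1 from by omega]
  simp only [gbr, Nat.add_sub_cancel]
  rw [circ_sub_left, circ_sub_left, circ_sub_left,
      circ_zsmul_left, circ_zsmul_left, circ_zsmul_left]
  rw [circ_right Q (M + N) h _ _ _, circ_right M (N + Q) f _ _ _,
      circ_right N (Q + M) g _ _ _]
  have p1 := prelie M N Q f (toC g) (toC h) locg
  have p2 := prelie N M Q g (toC f) (toC h) locf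
  rw [show N + M + 1 = M + N + 1 from by omega, show M + Q + 1 = Q + M + 1 from by omega] at p2
  have p3 := prelie N Q M g (toC h) (toC f) loch
  have p4 := prelie Q N M h (toC g) (toC f) locg
  rw [show Q + N + 1 = N + Q + 1 from by omega, show N + M + 1 = M + N + 1 from by omega] at p4
  have p5 := prelie Q M N h (toC f) (toC g) locf
  have p6 := prelie M Q N f (toC h) (toC g) loch
  rw [show M + Q + 1 = Q + M + 1 from by omega, show Q + N + 1 = N + Q + 1 from by omega] at p6
  rw [p1, p2, p3, p4, p5, p6,
      D_symm N M Q (toC g) (toC f) (toC h),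
      D_symm Q N M (toC h) (toC g) (toC f),
      D_symm M Q N (toC f) (toC h) (toC g)]
  simp only [smul_add, smul_sub, smul_smul]
  simp only [Nat.add_mul, pow_add,
    show N * M = M * N from Nat.mul_comm N M,
    show Q * M = M * Q from Nat.mul_comm Q M,
    show Q * N = N * Q from Nat.mul_comm Q N]
  rcases Nat.even_or_odd (M * N) with h1 | h1 <;>
    rcases Nat.even_or_odd (N * Q) with h2 | h2 <;>
      rcases Nat.even_or_odd (M * Q) with h3 | h3 <;>
        simp only [h1.neg_one_pow, h2.neg_one_pow, h3.neg_one_pow, one_mul, mul_one,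
          neg_mul, mul_neg, neg_neg, one_smul, neg_smul, neg_one_smul] <;>
        abel
end

section
/- The Gerstenhaber bracket is compatible with the Hochschild differential (so that the shifted Hochschild cochain complex with the bracket is a differential graded Lie algebra): for f ∈ C^m(A,A) and g ∈ C^n(A,A), δ[f,g] = (−1)^{n−1} [δf, g] + [f, δg]. -/
variable {R A : Type} [CommRing R] [Ring A] [Algebra R A]

-- Auxiliary machinery for the proof

def ins (u w : ℕ) (a : ℕ → A) (x : A) : ℕ → A :=
  fun j => if j < u then a j else if j = u then x else a (j + w - 1)

def sh (u : ℕ) (a : ℕ → A) : ℕ → A := fun k => a (u + k)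

theorem circ_def (M N : ℕ) (x y : (ℕ → A) → A) (b : ℕ → A) :
    circ M N x y b
      = ∑ i ∈ Finset.range M, ((-1:ℤ)^(i*(N-1))) • x (ins i N b (y (sh i b))) := rfl

def IsExt (n : ℕ) (g : (ℕ → A) → A) : Prop :=
  ∀ a b : ℕ → A, (∀ k, k < n → a k = b k) → g a = g b

theorem toC_isExt {n : ℕ} (F : MultilinearMap R (fun _ : Fin n => A) A) :
    IsExt n (toC F) := by
  intro a b h
  unfold toC
  congr 1
  funext i
  exact h i i.isLt

theorem toC_ins_eq_update {M : ℕ} (F : MultilinearMap R (fun _ : Fin M => A) A)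
    {i : ℕ} (hi : i < M) (w : ℕ) (a : ℕ → A) (x : A) :
    toC F (ins i w a x)
      = F (Function.update (fun t : Fin M => if (t:ℕ) < i then a t else a (t + w - 1)) ⟨i, hi⟩ x) := by
  unfold toC
  congr 1
  funext t
  rcases eq_or_ne t ⟨i, hi⟩ with h | h
  · subst h; simp [ins, Function.update]
  · have h' : (t:ℕ) ≠ i := fun hc => h (Fin.ext hc)
    simp only [ins, Function.update, dif_neg h, if_neg h']

noncomputable def insHom {M : ℕ} (F : MultilinearMap R (fun _ : Fin M => A) A)
    {i : ℕ} (hi : i < M) (w : ℕ) (a : ℕ → A) : A →+ A :=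
  AddMonoidHom.mk' (fun x => toC F (ins i w a x)) (by
    intro x y
    show toC F (ins i w a (x + y)) = toC F (ins i w a x) + toC F (ins i w a y)
    rw [toC_ins_eq_update F hi, toC_ins_eq_update F hi, toC_ins_eq_update F hi,
      MultilinearMap.map_update_add])

theorem toC_ins_sub {M : ℕ} (F : MultilinearMap R (fun _ : Fin M => A) A)
    {i : ℕ} (hi : i < M) (w : ℕ) (a : ℕ → A) (x y : A) :
    toC F (ins i w a (x - y)) = toC F (ins i w a x) - toC F (ins i w a y) :=
  map_sub (insHom F hi w a) x y

theorem toC_ins_zsmul {M : ℕ} (F : MultilinearMap R (fun _ : Fin M => A) A)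
    {i : ℕ} (hi : i < M) (w : ℕ) (a : ℕ → A) (c : ℤ) (x : A) :
    toC F (ins i w a (c • x)) = c • toC F (ins i w a x) :=
  map_zsmul (insHom F hi w a) c x

theorem toC_ins_sum {M : ℕ} (F : MultilinearMap R (fun _ : Fin M => A) A)
    {i : ℕ} (hi : i < M) (w : ℕ) (a : ℕ → A) {β : Type} (s : Finset β)
    (c : β → ℤ) (x : β → A) :
    toC F (ins i w a (∑ b ∈ s, c b • x b)) = ∑ b ∈ s, c b • toC F (ins i w a (x b)) := by
  rw [show toC F (ins i w a (∑ b ∈ s, c b • x b)) = insHom F hi w a (∑ b ∈ s, c b • x b) from rfl,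
    map_sum]
  exact Finset.sum_congr rfl fun b _ => map_zsmul (insHom F hi w a) (c b) (x b)

theorem circ_left_sub (M N : ℕ) (x y z : (ℕ → A) → A) :
    circ M N (x - y) z = circ M N x z - circ M N y z := by
  funext a
  simp only [circ_def, Pi.sub_apply, smul_sub, Finset.sum_sub_distrib]

theorem circ_left_smul (M N : ℕ) (c : ℤ) (x z : (ℕ → A) → A) :
    circ M N (c • x) z = c • circ M N x z := by
  funext a
  simp only [circ_def, Pi.smul_apply, Finset.smul_sum, smul_comm c]

theorem circ_right_sub (M N : ℕ) (F : MultilinearMap R (fun _ : Fin M => A) A)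
    (y z : (ℕ → A) → A) :
    circ M N (toC F) (y - z) = circ M N (toC F) y - circ M N (toC F) z := by
  funext a
  rw [Pi.sub_apply, circ_def, circ_def, circ_def, ← Finset.sum_sub_distrib]
  refine Finset.sum_congr rfl fun i hi => ?_
  rw [Pi.sub_apply, toC_ins_sub F (Finset.mem_range.mp hi), smul_sub]

theorem circ_right_smul (M N : ℕ) (F : MultilinearMap R (fun _ : Fin M => A) A)
    (c : ℤ) (y : (ℕ → A) → A) :
    circ M N (toC F) (c • y) = c • circ M N (toC F) y := by
  funext a
  rw [circ_def, Pi.smul_apply, circ_def, Finset.smul_sum]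

  refine Finset.sum_congr rfl fun i hi => ?_
  rw [Pi.smul_apply, toC_ins_zsmul F (Finset.mem_range.mp hi), smul_comm]

theorem gbr_left_smul (M N : ℕ) (c : ℤ) (x : (ℕ → A) → A)
    (G : MultilinearMap R (fun _ : Fin N => A) A) :
    gbr M N (c • x) (toC G) = c • gbr M N x (toC G) := by
  unfold gbr
  rw [circ_left_smul, circ_right_smul, smul_sub, smul_comm]

theorem gbr_right_smul (M N : ℕ) (F : MultilinearMap R (fun _ : Fin M => A) A)
    (c : ℤ) (y : (ℕ → A) → A) :
    gbr M N (toC F) (c • y) = c • gbr M N (toC F) y := by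
  unfold gbr
  rw [circ_right_smul, circ_left_smul, smul_sub, smul_comm]

-- The off-diagonal "disjoint insertion" terms.
def Dt (n p : ℕ) {M : ℕ} (F : MultilinearMap R (fun _ : Fin M => A) A)
    (g h : (ℕ → A) → A) (a : ℕ → A) (s t : ℕ) : A :=
  if t < s then
    ((-1:ℤ)^(t*p + s*n)) • toC F (fun j =>
      if j < t then a j else if j = t then h (sh t a)
      else if j < s then a (j+p) else if j = s then g (sh (s+p) a) else a (j+n+p))
  else if s < t then
    ((-1:ℤ)^((t+n)*p + s*n)) • toC F (fun j =>
      if j < s then a j else if j = s then g (sh s a)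
      else if j < t then a (j+n) else if j = t then h (sh (t+n) a) else a (j+n+p))
  else 0

theorem expand (m n p : ℕ) (F : MultilinearMap R (fun _ : Fin (m+1) => A) A)
    (g h : (ℕ → A) → A) (hg : IsExt (n+1) g) (a : ℕ → A) :
    circ (m+n+1) (p+1) (circ (m+1) (n+1) (toC F) g) h a
      = circ (m+1) (n+p+1) (toC F) (circ (n+1) (p+1) g h) a
        + ∑ s ∈ Finset.range (m+1), ∑ t ∈ Finset.range (m+1), Dt n p F g h a s t := by
  simp only [circ_def, Nat.add_sub_cancel]
  simp only [Finset.smul_sum, smul_smul, ← pow_add]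
  rw [Finset.sum_comm, ← Finset.sum_add_distrib]
  refine Finset.sum_congr rfl fun i hi => ?_
  have him : i < m + 1 := Finset.mem_range.mp hi
  -- rewrite the middle term via multilinearity
  rw [toC_ins_sum F him, Finset.smul_sum]
  simp only [smul_smul, ← pow_add]
  -- replace all `range`s by `Ico 0`
  simp only [Finset.range_eq_Ico]
  -- split the Dt row at t = i
  rw [← Finset.sum_Ico_consecutive (fun t => Dt n p F g h a i t) (Nat.zero_le i)
      (by omega : i ≤ m+1),
    ← Finset.sum_Ico_consecutive (fun t => Dt n p F g h a i t) (by omega : i ≤ i+1)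
      (by omega : i+1 ≤ m+1)]
  have hmid0 : ∑ t ∈ Finset.Ico i (i+1), Dt n p F g h a i t = 0 := by
    simp [Dt]
  rw [hmid0, zero_add]
  -- split the u-sum into three pieces
  rw [← Finset.sum_Ico_consecutive _ (Nat.zero_le (i+n+1)) (by omega : i+n+1 ≤ m+n+1),
    ← Finset.sum_Ico_consecutive _ (Nat.zero_le i) (by omega : i ≤ i+n+1)]
  have hA : (∑ u ∈ Finset.Ico 0 i,
      ((-1:ℤ)^(u*p + i*n)) •
        toC F (ins i (n+1) (ins u (p+1) a (h (sh u a)))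
          (g (sh i (ins u (p+1) a (h (sh u a)))))))
      = ∑ t ∈ Finset.Ico 0 i, Dt n p F g h a i t := by
    refine Finset.sum_congr rfl fun u hu => ?_
    have hui : u < i := (Finset.mem_Ico.mp hu).2
    simp only [Dt, if_pos hui]
    have hgv : g (sh i (ins u (p+1) a (h (sh u a)))) = g (sh (i+p) a) := by
      refine congrArg g (funext fun k => ?_)
      simp only [sh, ins]
      split_ifs <;> first | rfl | omega | exact congrArg a (by omega)
    rw [hgv]
    refine congrArg _ (congrArg (toC F) (funext fun j => ?_))
    simp only [ins]
    split_ifs <;> first | rfl | omega | exact congrArg a (by omega)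
  have hB : (∑ u ∈ Finset.Ico i (i+n+1),
      ((-1:ℤ)^(u*p + i*n)) •
        toC F (ins i (n+1) (ins u (p+1) a (h (sh u a)))
          (g (sh i (ins u (p+1) a (h (sh u a)))))))
      = ∑ v ∈ Finset.Ico 0 (n+1),
          ((-1:ℤ)^(i*(n+p) + v*p)) •
            toC F (ins i (n+p+1) a (g (ins v (p+1) (sh i a) (h (sh v (sh i a)))))) := by
    rw [Finset.sum_Ico_eq_sum_range, Finset.sum_Ico_eq_sum_range,
      show i+n+1-i = n+1 from by omega, show n+1-0 = n+1 from by omega]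
    refine Finset.sum_congr rfl fun v hv => ?_
    have hvn : v < n + 1 := Finset.mem_range.mp hv
    simp only [Nat.zero_add]
    have hsh : sh v (sh i a) = sh (i+v) a := funext fun k => by
      simp only [sh]; exact congrArg a (by omega)
    rw [hsh, show (i+v)*p + i*n = i*(n+p) + v*p from by ring]
    have hgv : g (sh i (ins (i+v) (p+1) a (h (sh (i+v) a))))
        = g (ins v (p+1) (sh i a) (h (sh (i+v) a))) := by
      refine congrArg g (funext fun k => ?_)
      simp only [sh, ins]
      split_ifs <;> first | rfl | omega | exact congrArg a (by omega)
    rw [hgv]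
    refine congrArg _ (congrArg (toC F) (funext fun j => ?_))
    simp only [ins]
    split_ifs <;> first | rfl | omega | exact congrArg a (by omega)
  have hC : (∑ u ∈ Finset.Ico (i+n+1) (m+n+1),
      ((-1:ℤ)^(u*p + i*n)) •
        toC F (ins i (n+1) (ins u (p+1) a (h (sh u a)))
          (g (sh i (ins u (p+1) a (h (sh u a)))))))
      = ∑ t ∈ Finset.Ico (i+1) (m+1), Dt n p F g h a i t := by
    rw [Finset.sum_Ico_eq_sum_range, Finset.sum_Ico_eq_sum_range,
      show m+n+1-(i+n+1) = m-i from by omega, show m+1-(i+1) = m-i from by omega]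
    refine Finset.sum_congr rfl fun k hk => ?_
    simp only [Dt, if_neg (by omega : ¬ (i+1+k < i)), if_pos (by omega : i < i+1+k)]
    have hgv : g (sh i (ins (i+n+1+k) (p+1) a (h (sh (i+n+1+k) a)))) = g (sh i a) := by
      refine hg _ _ fun k' hk' => ?_
      simp only [sh, ins]
      rw [if_pos (by omega)]
    rw [hgv, show (i+n+1+k)*p + i*n = ((i+1+k)+n)*p + i*n from by ring]
    refine congrArg _ (congrArg (toC F) (funext fun j => ?_))
    simp only [ins, sh]
    split_ifs <;>
      first
        | rfl
        | omega
        | exact congrArg a (by omega)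
        | exact congrArg h (funext fun k' => congrArg a (by omega))
  rw [hA, hB, hC]
  abel

theorem Dsym (n p : ℕ) {M : ℕ} (F : MultilinearMap R (fun _ : Fin M => A) A)
    (g h : (ℕ → A) → A) (a : ℕ → A) (s t : ℕ) :
    ((-1:ℤ)^(n*p)) • Dt p n F h g a t s = Dt n p F g h a s t := by
  rcases lt_trichotomy t s with hlt | heq | hgt
  · simp only [Dt, if_neg (by omega : ¬ s < t), if_pos hlt]
    rw [smul_smul, ← pow_add,
      show n*p + ((s+p)*n + t*p) = (t*p + s*n) + 2*(n*p) from by ring, pow_add, pow_mul]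
    norm_num
    refine congrArg _ (congrArg (toC F) (funext fun j => ?_))
    split_ifs <;> first | rfl | omega | exact congrArg a (by omega)
  · subst heq
    simp [Dt]
  · simp only [Dt, if_pos hgt, if_neg (by omega : ¬ t < s)]
    rw [smul_smul, ← pow_add,
      show n*p + (s*n + t*p) = (t+n)*p + s*n from by ring]
    refine congrArg _ (congrArg (toC F) (funext fun j => ?_))
    split_ifs <;> first | rfl | omega | exact congrArg a (by omega)

theorem prelie (m n p : ℕ) (F : MultilinearMap R (fun _ : Fin (m+1) => A) A)
    (g h : (ℕ → A) → A) (hg : IsExt (n+1) g) (hh : IsExt (p+1) h) :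
    circ (m+n+1) (p+1) (circ (m+1) (n+1) (toC F) g) h
        - circ (m+1) (n+p+1) (toC F) (circ (n+1) (p+1) g h)
      = ((-1:ℤ)^(n*p)) •
          (circ (m+p+1) (n+1) (circ (m+1) (p+1) (toC F) h) g
            - circ (m+1) (p+n+1) (toC F) (circ (p+1) (n+1) h g)) := by
  funext a
  have E1 := expand m n p F g h hg a
  have E2 := expand m p n F h g hh a
  simp only [Pi.smul_apply, Pi.sub_apply]
  rw [E1, E2, add_sub_cancel_left, add_sub_cancel_left]
  calc ∑ s ∈ Finset.range (m+1), ∑ t ∈ Finset.range (m+1), Dt n p F g h a s t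
      = ∑ t ∈ Finset.range (m+1), ∑ s ∈ Finset.range (m+1), Dt n p F g h a s t :=
        Finset.sum_comm
    _ = ∑ t ∈ Finset.range (m+1), ∑ s ∈ Finset.range (m+1),
          ((-1:ℤ)^(n*p)) • Dt p n F h g a t s :=
        Finset.sum_congr rfl fun t _ => Finset.sum_congr rfl fun s _ =>
          (Dsym n p F g h a s t).symm
    _ = ((-1:ℤ)^(n*p)) • ∑ t ∈ Finset.range (m+1), ∑ s ∈ Finset.range (m+1),
          Dt p n F h g a t s := by
        rw [Finset.smul_sum]
        exact Finset.sum_congr rfl fun t _ => (Finset.smul_sum).symm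

noncomputable def muMl : MultilinearMap R (fun _ : Fin 2 => A) A :=
  MultilinearMap.mkPiAlgebraFin R 2 A

theorem toC_muMl (b : ℕ → A) : toC (muMl (R := R) (A := A)) b = b 0 * b 1 := by
  simp [toC, muMl, MultilinearMap.mkPiAlgebraFin_apply, List.ofFn_succ]

theorem hochδ_eq (k : ℕ) (x : (ℕ → A) → A) :
    hochδ (k+1) x = ((-1:ℤ)^k) • gbr 2 (k+1) (toC (muMl (R := R) (A := A))) x := by
  funext a
  have hx0 : sh 0 a = a := funext fun j => congrArg a (Nat.zero_add j)
  have hx1 : sh 1 a = fun i => a (i+1) := funext fun j => congrArg a (by omega)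
  have h2 : circ 2 (k+1) (toC (muMl (R := R) (A := A))) x a
      = x a * a (k+1) + ((-1:ℤ)^k) • (a 0 * x (fun i => a (i+1))) := by
    rw [circ_def, Finset.sum_range_succ, Finset.sum_range_one, toC_muMl, toC_muMl, hx0, hx1]
    simp only [ins, Nat.add_sub_cancel, one_mul, zero_mul, pow_zero, one_smul]
    norm_num
  have h3 : circ (k+1) 2 x (toC (muMl (R := R) (A := A))) a
      = ∑ i ∈ Finset.range (k+1), ((-1:ℤ)^i) •
          x (fun j => if j < i then a j else if j = i then a i * a (i+1) else a (j+1)) := by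
    rw [circ_def]
    refine Finset.sum_congr rfl fun i _ => ?_
    rw [toC_muMl, show i * (2-1) = i from by omega]
    refine congrArg _ (congrArg x (funext fun j => ?_))
    simp only [ins, sh]
    split_ifs <;>
      first
        | rfl
        | omega
        | exact congrArg a (by omega)
        | exact congrArg (fun z => z * a (i+1)) (congrArg a (by omega))
  simp only [hochδ, gbr, Pi.sub_apply, Pi.smul_apply]
  rw [h2, h3, show (2-1) * ((k+1)-1) = k from by omega]
  have hsum : ∑ i ∈ Finset.range (k+1), ((-1:ℤ)^(i+1)) •
        x (fun j => if j < i then a j else if j = i then a i * a (i+1) else a (j+1))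
      = -∑ i ∈ Finset.range (k+1), ((-1:ℤ)^i) •
          x (fun j => if j < i then a j else if j = i then a i * a (i+1) else a (j+1)) := by
    rw [← Finset.sum_neg_distrib]
    refine Finset.sum_congr rfl fun i _ => ?_
    rw [pow_succ, mul_smul, neg_one_smul, smul_neg]
  rw [hsum, smul_sub, smul_add, smul_smul, ← pow_add, smul_smul, ← pow_add,
    show ((-1:ℤ))^(k+k) = 1 from Even.neg_one_pow ⟨k, rfl⟩, one_smul, one_smul,
    show k+1+1 = k+2 from rfl, show ((-1:ℤ))^(k+2) = (-1)^k from by rw [pow_add]; norm_num]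
  abel

theorem sgnIf (e : ℕ) : ((-1:ℤ))^e = if Even e then 1 else -1 := by
  rcases Nat.even_or_odd e with h | h
  · rw [if_pos h, h.neg_one_pow]
  · rw [if_neg (Nat.not_even_iff_odd.mpr h), h.neg_one_pow]

/-- The Gerstenhaber bracket is compatible with the Hochschild differential:
`δ[f,g] = (−1)^{n−1} [δf, g] + [f, δg]`. -/
theorem hochschild_delta_bracket (m n : ℕ) (hm : 1 ≤ m) (hn : 1 ≤ n)
    (f : MultilinearMap R (fun _ : Fin m => A) A)
    (g : MultilinearMap R (fun _ : Fin n => A) A) :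
    hochδ (m + n - 1) (gbr m n (toC f) (toC g)) =
      ((-1 : ℤ) ^ (n - 1)) • gbr (m + 1) n (hochδ m (toC f)) (toC g)
        + gbr m (n + 1) (toC f) (hochδ n (toC g)) := by
  obtain ⟨m', rfl⟩ : ∃ m', m = m' + 1 := ⟨m - 1, by omega⟩
  obtain ⟨n', rfl⟩ : ∃ n', n = n' + 1 := ⟨n - 1, by omega⟩
  rw [show m' + 1 + (n' + 1) - 1 = (m' + n') + 1 from by omega,
    show (n' + 1) - 1 = n' from rfl,
    hochδ_eq (R := R) (m' + n'), hochδ_eq (R := R) m', hochδ_eq (R := R) n',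
    gbr_left_smul, gbr_right_smul,
    show m' + 1 + 1 = m' + 2 from rfl, show n' + 1 + 1 = n' + 2 from rfl]
  -- the three pre-Lie identities
  have P1 := prelie 1 m' n' (muMl (R := R) (A := A)) (toC f) (toC g) (toC_isExt f) (toC_isExt g)
  have P2 := prelie m' 1 n' f (toC (muMl (R := R) (A := A))) (toC g) (toC_isExt (muMl (R := R) (A := A))) (toC_isExt g)
  have P3 := prelie n' 1 m' g (toC (muMl (R := R) (A := A))) (toC f) (toC_isExt (muMl (R := R) (A := A))) (toC_isExt f)
  simp only [show (1:ℕ)+1 = 2 from rfl, show ∀ x:ℕ, 1+x+1 = x+2 from fun _ => by omega,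
    show ∀ x:ℕ, x+1+1 = x+2 from fun _ => rfl, one_mul,
    show n'+m'+1 = m'+n'+1 from by omega] at P1 P2 P3
  -- the graded Jacobi identity
  have J : gbr 2 (m'+n'+1) (toC (muMl (R := R) (A := A)))
        (gbr (m'+1) (n'+1) (toC f) (toC g))
      = gbr (m'+2) (n'+1) (gbr 2 (m'+1) (toC (muMl (R := R) (A := A))) (toC f)) (toC g)
        + ((-1:ℤ)^m') • gbr (m'+1) (n'+2) (toC f)
            (gbr 2 (n'+1) (toC (muMl (R := R) (A := A))) (toC g)) := by
    simp only [gbr, Nat.add_sub_cancel, show (2:ℕ)-1 = 1 from rfl,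
      show ∀ x:ℕ, x+2-1 = x+1 from fun _ => rfl, one_mul, mul_one]
    simp only [circ_right_sub, circ_right_smul, circ_left_sub, circ_left_smul]
    simp only [smul_sub, smul_smul, ← pow_add]
    linear_combination (norm :=
      (match_scalars <;>
        first
          | ring1
          | (simp only [sgnIf]
             rcases Nat.even_or_odd m' with hm1 | hm1 <;>
               rcases Nat.even_or_odd n' with hn1 | hn1 <;>
               simp_all [Nat.even_add, Nat.even_mul, ← Nat.not_even_iff_odd])))
      (-1 : ℤ) • P1 + ((-1:ℤ)^m') • P2 - ((-1:ℤ)^((m'+1)*n')) • P3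
  rw [J, smul_add, smul_smul, ← pow_add, smul_smul, ← pow_add,
    show m'+n'+m' = n' + 2*m' from by ring, show m'+n' = n'+m' from by omega]
  congr 1
  rw [pow_add, pow_mul]
  norm_num
end

section
/- The cup product is graded commutative up to a Hochschild coboundary: if f ∈ C^m(A,A) and g ∈ C^n(A,A) are Hochschild cocycles (δf = 0 and δg = 0), then there exists h ∈ C^{m+n−1}(A,A) with f ⌣ g − (−1)^{mn} g ⌣ f = δh; consequently the cup product on Hochschild cohomology is graded commutative. -/
variable {R A : Type} [CommRing R] [Ring A] [Algebra R A]

namespace CupG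

def σf (a : ℕ → A) : ℕ → A := fun j => a (j + 1)
def sh (i : ℕ) (a : ℕ → A) : ℕ → A := fun k => a (i + k)
def μf (p : ℕ) (a : ℕ → A) : ℕ → A :=
  fun j => if j < p then a j else if j = p then a p * a (p + 1) else a (j + 1)
def Dg (G : (ℕ → A) → A) (n i : ℕ) (a : ℕ → A) : ℕ → A :=
  fun j => if j < i then a j else if j = i then G (sh i a) else a (j + n - 1)
def ins (n i : ℕ) (x : A) (a : ℕ → A) : ℕ → A :=
  fun j => if j < i then a j else if j = i then x else a (j + n)

lemma hochδ_apply (k : ℕ) (X : (ℕ → A) → A) (a : ℕ → A) :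
    hochδ k X a = a 0 * X (σf a)
      + (∑ p ∈ Finset.range k, ((-1 : ℤ) ^ (p + 1)) • X (μf p a))
      + ((-1 : ℤ) ^ (k + 1)) • (X a * a k) := rfl

lemma circ_apply (m n : ℕ) (F G : (ℕ → A) → A) (a : ℕ → A) :
    circ m n F G a = ∑ i ∈ Finset.range m, ((-1 : ℤ) ^ (i * (n - 1))) • F (Dg G n i a) := rfl

lemma cup_apply (m n : ℕ) (F G : (ℕ → A) → A) (a : ℕ → A) :
    cup m n F G a = F a * G (sh m a) := rfl

lemma neg1pow_shift (b t : ℕ) : ((-1 : ℤ)) ^ (b + 2 * t) = (-1) ^ b := by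
  rw [pow_add, pow_mul]; norm_num

lemma cancel_pair (e : ℕ) (x : A) :
    ((-1 : ℤ) ^ (e + 1)) • x + ((-1 : ℤ) ^ e) • x = 0 := by
  rw [pow_succ, mul_neg_one, neg_smul, neg_add_cancel]

lemma tri {M : Type*} [AddCommMonoid M] (m : ℕ) (φ : ℕ → ℕ → M) :
    ∑ k ∈ Finset.range m, ∑ i ∈ Finset.range k, φ i k
      = ∑ i ∈ Finset.range m, ∑ j ∈ Finset.range (m - 1 - i), φ i (i + 1 + j) := by
  induction m with
  | zero => simp
  | succ m ih =>
      rw [Finset.sum_range_succ, ih, Finset.sum_range_succ]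
      have h1 : ∀ i ∈ Finset.range m,
          ∑ j ∈ Finset.range (m + 1 - 1 - i), φ i (i + 1 + j)
            = (∑ j ∈ Finset.range (m - 1 - i), φ i (i + 1 + j)) + φ i m := by
        intro i hi
        have hi' := Finset.mem_range.mp hi
        have h2 : m + 1 - 1 - i = (m - 1 - i) + 1 := by omega
        rw [h2, Finset.sum_range_succ]
        congr 2
        omega
      rw [Finset.sum_congr rfl h1, Finset.sum_add_distrib]
      have h3 : ∑ j ∈ Finset.range (m + 1 - 1 - m), φ m (m + 1 + j) = 0 := by
        have : m + 1 - 1 - m = 0 := by omega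
        simp [this]
      rw [h3, add_zero]

end CupG

namespace CupG

variable (G : (ℕ → A) → A) (a : ℕ → A) (nn : ℕ)

lemma σf_def : σf a = fun j => a (j + 1) := rfl
lemma sh_def (i : ℕ) : sh i a = fun k => a (i + k) := rfl
lemma μf_def (p : ℕ) : μf p a = fun j =>
    if j < p then a j else if j = p then a p * a (p + 1) else a (j + 1) := rfl
lemma Dg_def (n i : ℕ) : Dg G n i a = fun j =>
    if j < i then a j else if j = i then G (sh i a) else a (j + n - 1) := rfl
lemma ins_def (n i : ℕ) (x : A) : ins n i x a = fun j =>
    if j < i then a j else if j = i then x else a (j + n) := rfl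

lemma dg_lt {n i j : ℕ} (h : j < i) : Dg G n i a j = a j := if_pos h

lemma dg_eq (n i : ℕ) : Dg G n i a i = G (sh i a) := by
  simp [Dg]

lemma dg_gt {i j : ℕ} (h : i < j) : Dg G (nn + 1) i a j = a (j + nn) := by
  simp only [Dg]
  rw [if_neg (by omega), if_neg (by omega)]
  exact congrArg a (by omega)

lemma sh_zero : sh 0 a = a := by
  funext k; exact congrArg a (Nat.zero_add k)

lemma sh_at (i : ℕ) : sh i a 0 = a i := rfl

lemma sh_succ (i : ℕ) : σf (sh i a) = sh (i + 1) a := by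
  funext k; exact congrArg a (by omega)

lemma FL0 (i : ℕ) : Dg G (nn + 1) (i + 1) a 0 = a 0 := if_pos (Nat.succ_pos i)

lemma FL1 (i : ℕ) : σf (Dg G (nn + 1) (i + 1) a) = Dg G (nn + 1) i (σf a) := by
  funext j
  simp only [σf_def, Dg_def, sh_def]
  split_ifs <;>
    first
      | rfl
      | omega
      | (exact congrArg a (by omega))
      | (congr 1; funext k; exact congrArg a (by omega))

lemma σD0 : σf (Dg G (nn + 1) 0 a) = sh (nn + 1) a := by
  funext j
  simp only [σf_def, Dg_def, sh_def]
  rw [if_neg (by omega), if_neg (by omega)]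
  exact congrArg a (by omega)

lemma FL2 {p i : ℕ} (h : p < i) : Dg G (nn + 1) i (μf p a) = μf p (Dg G (nn + 1) (i + 1) a) := by
  funext j
  simp only [μf_def, Dg_def, sh_def]
  split_ifs <;>
    first
      | rfl
      | omega
      | (exact congrArg a (by omega))
      | (congr 1 <;> exact congrArg a (by omega))
      | (congr 1; funext k; split_ifs <;>
          first
            | rfl
            | omega
            | (exact congrArg a (by omega))
            | (congr 1 <;> exact congrArg a (by omega)))

lemma FL3 {q : ℕ} (i : ℕ) (h : q ≤ nn) :
    Dg G (nn + 1) i (μf (i + q) a) = ins (nn + 1) i (G (μf q (sh i a))) a := by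
  funext j
  simp only [μf_def, Dg_def, ins_def, sh_def]
  split_ifs <;>
    first
      | rfl
      | omega
      | (exact congrArg a (by omega))
      | (congr 1 <;> exact congrArg a (by omega))
      | (congr 1; funext k; split_ifs <;>
          first
            | rfl
            | omega
            | (exact congrArg a (by omega))
            | (congr 1 <;> exact congrArg a (by omega)))

lemma FL4 (hG : ∀ X Y : ℕ → A, (∀ t, t < nn + 1 → X t = Y t) → G X = G Y) (i j : ℕ) :
    Dg G (nn + 1) i (μf (i + (nn + 1 + j)) a) = μf (i + 1 + j) (Dg G (nn + 1) i a) := by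
  funext j'
  simp only [μf_def, Dg_def, sh_def]
  split_ifs <;>
    first
      | rfl
      | omega
      | (exact congrArg a (by omega))
      | (congr 1 <;> exact congrArg a (by omega))
      | (exact hG _ _ (fun t ht => by rw [if_pos (by omega)]))

lemma FLV (i : ℕ) :
    μf i (Dg G (nn + 1) (i + 1) a) = ins (nn + 1) i (a i * G (sh (i + 1) a)) a := by
  funext j
  simp only [μf_def, Dg_def, ins_def, sh_def]
  split_ifs <;>
    first
      | rfl
      | omega
      | (exact congrArg a (by omega))
      | (congr 1 <;>
          first
            | (exact congrArg a (by omega))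
            | (congr 1; funext k; exact congrArg a (by omega)))

lemma FLW (i : ℕ) :
    μf i (Dg G (nn + 1) i a) = ins (nn + 1) i (G (sh i a) * a (i + (nn + 1))) a := by
  funext j
  simp only [μf_def, Dg_def, ins_def, sh_def]
  split_ifs <;>
    first
      | rfl
      | omega
      | (exact congrArg a (by omega))
      | (congr 1 <;>
          first
            | (exact congrArg a (by omega))
            | (congr 1; funext k; exact congrArg a (by omega)))

section Slot

variable {mm : ℕ}

lemma toC_congr {m : ℕ} (f : MultilinearMap R (fun _ : Fin m => A) A) {X Y : ℕ → A}
    (h : ∀ j, j < m → X j = Y j) : toC f X = toC f Y := by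
  unfold toC
  congr 1
  funext j
  exact h j j.isLt

lemma ins_rep (i : ℕ) (hi : i ≤ mm) (x : A) :
    (fun j : Fin (mm + 1) => ins (nn + 1) i x a j.val)
      = Function.update (fun j : Fin (mm + 1) => ins (nn + 1) i (0 : A) a j.val)
          (⟨i, by omega⟩ : Fin (mm + 1)) x := by
  funext j
  rcases eq_or_ne j (⟨i, by omega⟩ : Fin (mm + 1)) with h | h
  · subst h
    simp only [Function.update_self, ins_def a]
    rw [if_neg (by omega)]
    simp
  · rw [Function.update_of_ne h]
    have hji : (j : ℕ) ≠ i := fun hc => h (Fin.ext hc)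
    simp only [ins_def a]
    split_ifs <;> first | rfl | omega

def slotHom (f : MultilinearMap R (fun _ : Fin (mm + 1) => A) A) (i : ℕ) (hi : i ≤ mm) :
    A →+ A where
  toFun x := toC f (ins (nn + 1) i x a)
  map_zero' := f.map_coord_zero (⟨i, by omega⟩ : Fin (mm + 1))
    (by simp only [ins_def a]; rw [if_neg (by omega)]; simp)
  map_add' x y := by
    show toC f _ = toC f _ + toC f _
    unfold toC
    rw [ins_rep a nn i hi (x + y), ins_rep a nn i hi x, ins_rep a nn i hi y,
      f.map_update_add]

lemma slotHom_apply (f : MultilinearMap R (fun _ : Fin (mm + 1) => A) A)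
    (i : ℕ) (hi : i ≤ mm) (x : A) :
    slotHom a nn f i hi x = toC f (ins (nn + 1) i x a) := rfl

end Slot

section Term

variable {mm nn : ℕ} (g : MultilinearMap R (fun _ : Fin (nn + 1) => A) A)

def inputFun (i : Fin (mm + 1)) (v : Fin (mm + 1 + nn) → A) : Fin (mm + 1) → A :=
  fun j => if (j : ℕ) < (i : ℕ) then v ⟨j, by have := j.isLt; omega⟩
    else if (j : ℕ) = (i : ℕ) then
      g (fun k => v ⟨(i : ℕ) + (k : ℕ), by have := i.isLt; have := k.isLt; omega⟩)
    else v ⟨(j : ℕ) + nn, by have := j.isLt; omega⟩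

lemma rep1 (i : Fin (mm + 1)) (v : Fin (mm + 1 + nn) → A) (e : Fin (mm + 1 + nn))
    (he : (e : ℕ) < (i : ℕ)) (z : A) :
    inputFun g i (Function.update v e z)
      = Function.update (inputFun g i v) (⟨e, by have := i.isLt; omega⟩ : Fin (mm + 1)) z := by
  funext j
  simp only [inputFun, Function.update_apply, Fin.ext_iff, Fin.val_mk]
  split_ifs <;>
    first
      | rfl
      | omega
      | (congr 1; funext k; rw [if_neg (by have := k.isLt; omega)])

lemma rep2 (i : Fin (mm + 1)) (v : Fin (mm + 1 + nn) → A) (e : Fin (mm + 1 + nn))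
    (hlo : (i : ℕ) ≤ (e : ℕ)) (hhi : (e : ℕ) ≤ (i : ℕ) + nn) (z : A) :
    inputFun g i (Function.update v e z)
      = Function.update (inputFun g i v) i
          (g (Function.update
            (fun k : Fin (nn + 1) =>
              v ⟨(i : ℕ) + (k : ℕ), by have := i.isLt; have := k.isLt; omega⟩)
            (⟨(e : ℕ) - (i : ℕ), by omega⟩ : Fin (nn + 1)) z)) := by
  funext j
  simp only [inputFun, Function.update_apply, Fin.ext_iff, Fin.val_mk]
  split_ifs <;>
    first
      | rfl
      | omega
      | (congr 1; funext k; simp only [Function.update_apply, Fin.ext_iff, Fin.val_mk];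
          split_ifs <;> first | rfl | omega)

lemma rep3 (i : Fin (mm + 1)) (v : Fin (mm + 1 + nn) → A) (e : Fin (mm + 1 + nn))
    (he : (i : ℕ) + nn < (e : ℕ)) (z : A) :
    inputFun g i (Function.update v e z)
      = Function.update (inputFun g i v)
          (⟨(e : ℕ) - nn, by have := e.isLt; omega⟩ : Fin (mm + 1)) z := by
  funext j
  simp only [inputFun, Function.update_apply, Fin.ext_iff, Fin.val_mk]
  split_ifs <;>
    first
      | rfl
      | omega
      | (congr 1; funext k; rw [if_neg (by have := k.isLt; omega)])

variable (f : MultilinearMap R (fun _ : Fin (mm + 1) => A) A)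

def term (i : Fin (mm + 1)) : MultilinearMap R (fun _ : Fin (mm + 1 + nn) => A) A where
  toFun v := f (inputFun g i v)
  map_update_add' := by
    intro dec v e x y
    have hdec : dec = instDecidableEqFin _ := Subsingleton.elim _ _
    subst hdec
    beta_reduce
    by_cases h1 : (e : ℕ) < (i : ℕ)
    · rw [rep1 g i v e h1 (x + y), rep1 g i v e h1 x, rep1 g i v e h1 y, f.map_update_add]
    · by_cases h2 : (e : ℕ) ≤ (i : ℕ) + nn
      · rw [rep2 g i v e (by omega) h2 (x + y), rep2 g i v e (by omega) h2 x,
          rep2 g i v e (by omega) h2 y, g.map_update_add, f.map_update_add]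
      · rw [rep3 g i v e (by omega) (x + y), rep3 g i v e (by omega) x,
          rep3 g i v e (by omega) y, f.map_update_add]
  map_update_smul' := by
    intro dec v e c x
    have hdec : dec = instDecidableEqFin _ := Subsingleton.elim _ _
    subst hdec
    beta_reduce
    by_cases h1 : (e : ℕ) < (i : ℕ)
    · rw [rep1 g i v e h1 (c • x), rep1 g i v e h1 x, f.map_update_smul]
    · by_cases h2 : (e : ℕ) ≤ (i : ℕ) + nn
      · rw [rep2 g i v e (by omega) h2 (c • x), rep2 g i v e (by omega) h2 x,
          g.map_update_smul, f.map_update_smul]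
      · rw [rep3 g i v e (by omega) (c • x), rep3 g i v e (by omega) x, f.map_update_smul]

def hcirc : MultilinearMap R (fun _ : Fin (mm + 1 + nn) => A) A :=
  ∑ i : Fin (mm + 1), ((-1 : ℤ) ^ ((i : ℕ) * nn)) • term g f i

lemma term_apply_toC (i : Fin (mm + 1)) (a : ℕ → A) :
    term g f i (fun j => a j.val) = toC f (Dg (toC g) (nn + 1) (i : ℕ) a) := rfl

lemma toC_hcirc : toC (hcirc g f) = circ (mm + 1) (nn + 1) (toC f) (toC g) := by
  funext a
  rw [circ_apply]
  show hcirc g f (fun j => a j.val) = _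
  rw [hcirc, MultilinearMap.sum_apply]
  simp only [MultilinearMap.smul_apply, term_apply_toC]
  rw [← Fin.sum_univ_eq_sum_range
    (fun i => ((-1 : ℤ) ^ (i * ((nn + 1) - 1))) • toC f (Dg (toC g) (nn + 1) i a)) (mm + 1)]
  simp only [Nat.add_sub_cancel]

end Term

section Main

variable {mm : ℕ} (nn : ℕ) (f : MultilinearMap R (fun _ : Fin (mm + 1) => A) A)
  (G : (ℕ → A) → A) (a : ℕ → A)

def blk : A :=
    (∑ i ∈ Finset.range (mm + 1), ((-1 : ℤ) ^ (i * nn)) •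
      (a 0 * toC f (Dg G (nn + 1) i (σf a))))
  + (∑ i ∈ Finset.range (mm + 1), ∑ p ∈ Finset.range i, ((-1 : ℤ) ^ (p + 1 + i * nn)) •
      toC f (μf p (Dg G (nn + 1) (i + 1) a)))
  + (∑ i ∈ Finset.range (mm + 1), ∑ q ∈ Finset.range (nn + 1), ((-1 : ℤ) ^ (i + q + 1 + i * nn)) •
      toC f (ins (nn + 1) i (G (μf q (sh i a))) a))
  + (∑ i ∈ Finset.range (mm + 1), ∑ j ∈ Finset.range (mm - i), ((-1 : ℤ) ^ (i + nn + j + i * nn)) •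
      toC f (μf (i + 1 + j) (Dg G (nn + 1) i a)))
  + (∑ i ∈ Finset.range (mm + 1), ((-1 : ℤ) ^ (mm + nn + i * nn)) •
      (toC f (Dg G (nn + 1) i a) * a (mm + 1 + nn)))

lemma blk_def : blk nn f G a =
    (∑ i ∈ Finset.range (mm + 1), ((-1 : ℤ) ^ (i * nn)) •
      (a 0 * toC f (Dg G (nn + 1) i (σf a))))
  + (∑ i ∈ Finset.range (mm + 1), ∑ p ∈ Finset.range i, ((-1 : ℤ) ^ (p + 1 + i * nn)) •
      toC f (μf p (Dg G (nn + 1) (i + 1) a)))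
  + (∑ i ∈ Finset.range (mm + 1), ∑ q ∈ Finset.range (nn + 1), ((-1 : ℤ) ^ (i + q + 1 + i * nn)) •
      toC f (ins (nn + 1) i (G (μf q (sh i a))) a))
  + (∑ i ∈ Finset.range (mm + 1), ∑ j ∈ Finset.range (mm - i), ((-1 : ℤ) ^ (i + nn + j + i * nn)) •
      toC f (μf (i + 1 + j) (Dg G (nn + 1) i a)))
  + (∑ i ∈ Finset.range (mm + 1), ((-1 : ℤ) ^ (mm + nn + i * nn)) •
      (toC f (Dg G (nn + 1) i a) * a (mm + 1 + nn))) := rfl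

lemma lemL (hG : ∀ X Y : ℕ → A, (∀ t, t < nn + 1 → X t = Y t) → G X = G Y) :
    hochδ (mm + 1 + nn) (circ (mm + 1) (nn + 1) (toC f) G) a = blk nn f G a := by
  have hT1 : a 0 * (∑ i ∈ Finset.range (mm + 1), ((-1 : ℤ) ^ (i * nn)) •
        toC f (Dg G (nn + 1) i (σf a)))
      = ∑ i ∈ Finset.range (mm + 1), ((-1 : ℤ) ^ (i * nn)) •
        (a 0 * toC f (Dg G (nn + 1) i (σf a))) := by
    rw [Finset.mul_sum]; simp only [mul_smul_comm]
  have hT3 : ((-1 : ℤ) ^ (mm + 1 + nn + 1)) •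
        ((∑ i ∈ Finset.range (mm + 1), ((-1 : ℤ) ^ (i * nn)) •
          toC f (Dg G (nn + 1) i a)) * a (mm + 1 + nn))
      = ∑ i ∈ Finset.range (mm + 1), ((-1 : ℤ) ^ (mm + nn + i * nn)) •
        (toC f (Dg G (nn + 1) i a) * a (mm + 1 + nn)) := by
    rw [Finset.sum_mul, Finset.smul_sum]
    refine Finset.sum_congr rfl fun i _ => ?_
    rw [smul_mul_assoc, smul_smul, ← pow_add,
      show mm + 1 + nn + 1 + i * nn = mm + nn + i * nn + 2 * 1 from by ring, neg1pow_shift]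
  have hT2 : (∑ p ∈ Finset.range (mm + 1 + nn), ((-1 : ℤ) ^ (p + 1)) •
        ∑ i ∈ Finset.range (mm + 1), ((-1 : ℤ) ^ (i * nn)) •
          toC f (Dg G (nn + 1) i (μf p a)))
      = (∑ i ∈ Finset.range (mm + 1), ∑ p ∈ Finset.range i, ((-1 : ℤ) ^ (p + 1 + i * nn)) •
          toC f (μf p (Dg G (nn + 1) (i + 1) a)))
      + ((∑ i ∈ Finset.range (mm + 1), ∑ q ∈ Finset.range (nn + 1),
            ((-1 : ℤ) ^ (i + q + 1 + i * nn)) •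
            toC f (ins (nn + 1) i (G (μf q (sh i a))) a))
        + (∑ i ∈ Finset.range (mm + 1), ∑ j ∈ Finset.range (mm - i),
            ((-1 : ℤ) ^ (i + nn + j + i * nn)) •
            toC f (μf (i + 1 + j) (Dg G (nn + 1) i a)))) := by
    simp only [Finset.smul_sum, smul_smul, ← pow_add]
    rw [Finset.sum_comm]
    have key : ∀ i ∈ Finset.range (mm + 1),
        (∑ p ∈ Finset.range (mm + 1 + nn), ((-1 : ℤ) ^ (p + 1 + i * nn)) •
          toC f (Dg G (nn + 1) i (μf p a)))
        = (∑ p ∈ Finset.range i, ((-1 : ℤ) ^ (p + 1 + i * nn)) •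
            toC f (μf p (Dg G (nn + 1) (i + 1) a)))
        + ((∑ q ∈ Finset.range (nn + 1), ((-1 : ℤ) ^ (i + q + 1 + i * nn)) •
              toC f (ins (nn + 1) i (G (μf q (sh i a))) a))
          + (∑ j ∈ Finset.range (mm - i), ((-1 : ℤ) ^ (i + nn + j + i * nn)) •
              toC f (μf (i + 1 + j) (Dg G (nn + 1) i a)))) := by
      intro i hi
      have hi' : i ≤ mm := by have := Finset.mem_range.mp hi; omega
      rw [show mm + 1 + nn = i + (nn + 1 + (mm - i)) from by omega,
        Finset.sum_range_add, Finset.sum_range_add]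
      congr 1
      · exact Finset.sum_congr rfl fun p hp => by
          rw [FL2 G a nn (Finset.mem_range.mp hp)]
      congr 1
      · exact Finset.sum_congr rfl fun q hq => by
          rw [FL3 G a nn i (by have := Finset.mem_range.mp hq; omega)]
      · exact Finset.sum_congr rfl fun j hj => by
          rw [FL4 G a nn hG i j,
            show i + (nn + 1 + j) + 1 + i * nn = i + nn + j + i * nn + 2 * 1 from by ring,
            neg1pow_shift]
    rw [Finset.sum_congr rfl key, Finset.sum_add_distrib, Finset.sum_add_distrib]
  rw [hochδ_apply]
  simp only [circ_apply, Nat.add_sub_cancel]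
  rw [hT1, hT2, hT3, blk_def]
  abel

lemma lemR (hG : ∀ X Y : ℕ → A, (∀ t, t < nn + 1 → X t = Y t) → G X = G Y) :
    (∑ i ∈ Finset.range (mm + 1 + 1), ((-1 : ℤ) ^ (nn + i * nn)) •
        hochδ (mm + 1) (toC f) (Dg G (nn + 1) i a))
      + (∑ i ∈ Finset.range (mm + 1), ((-1 : ℤ) ^ (i * (nn + 1))) •
        toC f (ins (nn + 1) i (hochδ (nn + 1) G (sh i a)) a))
      + ((-1 : ℤ) ^ ((mm + 1) * (nn + 1) + nn)) • (toC f a * G (sh (mm + 1) a))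
      + ((-1 : ℤ) ^ (nn + 1)) • (G a * toC f (sh (nn + 1) a))
    = blk nn f G a := by
  -- expand the f-cocycle sum into three pieces
  have hZ1 : (∑ i ∈ Finset.range (mm + 1 + 1), ((-1 : ℤ) ^ (nn + i * nn)) •
        hochδ (mm + 1) (toC f) (Dg G (nn + 1) i a))
      = (∑ i ∈ Finset.range (mm + 1 + 1), ((-1 : ℤ) ^ (nn + i * nn)) •
          (Dg G (nn + 1) i a 0 * toC f (σf (Dg G (nn + 1) i a))))
        + (∑ i ∈ Finset.range (mm + 1 + 1), ∑ p ∈ Finset.range (mm + 1),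
            ((-1 : ℤ) ^ (nn + i * nn + (p + 1))) • toC f (μf p (Dg G (nn + 1) i a)))
        + (∑ i ∈ Finset.range (mm + 1 + 1), ((-1 : ℤ) ^ (nn + i * nn + (mm + 1 + 1))) •
            (toC f (Dg G (nn + 1) i a) * Dg G (nn + 1) i a (mm + 1))) := by
    simp only [hochδ_apply, smul_add, Finset.smul_sum, smul_smul, ← pow_add,
      Finset.sum_add_distrib]
  -- piece a : boundary-left terms
  have hZ1a : (∑ i ∈ Finset.range (mm + 1 + 1), ((-1 : ℤ) ^ (nn + i * nn)) •
        (Dg G (nn + 1) i a 0 * toC f (σf (Dg G (nn + 1) i a))))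
      = (∑ i ∈ Finset.range (mm + 1), ((-1 : ℤ) ^ (i * nn)) •
          (a 0 * toC f (Dg G (nn + 1) i (σf a))))
        + ((-1 : ℤ) ^ nn) • (G a * toC f (sh (nn + 1) a)) := by
    rw [Finset.sum_range_succ']
    congr 1
    · refine Finset.sum_congr rfl fun i _ => ?_
      rw [FL0 G a nn i, FL1 G a nn i,
        show nn + (i + 1) * nn = i * nn + 2 * nn from by ring, neg1pow_shift]
    · rw [dg_eq G a (nn + 1) 0, sh_zero, σD0 G a nn,
        show nn + 0 * nn = nn + 2 * 0 from by ring, neg1pow_shift]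
  -- piece c : boundary-right terms
  have hZ1c : (∑ i ∈ Finset.range (mm + 1 + 1), ((-1 : ℤ) ^ (nn + i * nn + (mm + 1 + 1))) •
        (toC f (Dg G (nn + 1) i a) * Dg G (nn + 1) i a (mm + 1)))
      = (∑ i ∈ Finset.range (mm + 1), ((-1 : ℤ) ^ (mm + nn + i * nn)) •
          (toC f (Dg G (nn + 1) i a) * a (mm + 1 + nn)))
        + ((-1 : ℤ) ^ ((mm + 1) * (nn + 1) + nn + 1)) • (toC f a * G (sh (mm + 1) a)) := by
    rw [Finset.sum_range_succ]
    congr 1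
    · refine Finset.sum_congr rfl fun i hi => ?_
      rw [dg_gt G a nn (Finset.mem_range.mp hi),
        show nn + i * nn + (mm + 1 + 1) = mm + nn + i * nn + 2 * 1 from by ring, neg1pow_shift]
    · rw [dg_eq G a (nn + 1) (mm + 1),
        toC_congr f (fun j hj => dg_lt G a (show j < mm + 1 from hj)),
        show nn + (mm + 1) * nn + (mm + 1 + 1) = (mm + 1) * (nn + 1) + nn + 1 + 2 * 0 from by
          ring,
        neg1pow_shift]
  -- piece b : the interior merge terms
  have key2 : ∀ k ∈ Finset.range (mm + 1),
      (∑ i ∈ Finset.range (mm + 1 + 1), ((-1 : ℤ) ^ (nn + i * nn + (k + 1))) •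
          toC f (μf k (Dg G (nn + 1) i a)))
      = (∑ i ∈ Finset.range k, ((-1 : ℤ) ^ (nn + i * nn + (k + 1))) •
          toC f (μf k (Dg G (nn + 1) i a)))
        + (((-1 : ℤ) ^ (k * nn + k + nn + 1)) •
            toC f (ins (nn + 1) k (G (sh k a) * a (k + (nn + 1))) a)
          + (((-1 : ℤ) ^ (k * nn + k + 1)) •
              toC f (ins (nn + 1) k (a k * G (sh (k + 1) a)) a)
            + (∑ j ∈ Finset.range (mm - k), ((-1 : ℤ) ^ (k + 1 + (k + 1 + j) * nn)) •
                toC f (μf k (Dg G (nn + 1) (k + 1 + j + 1) a))))) := by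
    intro k hk
    have hk' : k ≤ mm := by have := Finset.mem_range.mp hk; omega
    rw [show mm + 1 + 1 = k + (1 + (1 + (mm - k))) from by omega,
      Finset.sum_range_add, Finset.sum_range_add, Finset.sum_range_add]
    simp only [Finset.sum_range_one, Nat.add_zero]
    congr 1
    congr 1
    · rw [FLW G a nn k, show nn + k * nn + (k + 1) = k * nn + k + nn + 1 from by ring]
    congr 1
    · rw [FLV G a nn k,
        show nn + (k + 1) * nn + (k + 1) = k * nn + k + 1 + 2 * nn from by ring, neg1pow_shift]
    · refine Finset.sum_congr rfl fun j hj => ?_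
      rw [show k + (1 + (1 + j)) = k + 1 + j + 1 from by omega,
        show nn + (k + 1 + j + 1) * nn + (k + 1) = k + 1 + (k + 1 + j) * nn + 2 * nn from by
          ring,
        neg1pow_shift]
  have hB1 : (∑ i ∈ Finset.range (mm + 1), ∑ p ∈ Finset.range i,
        ((-1 : ℤ) ^ (p + 1 + i * nn)) • toC f (μf p (Dg G (nn + 1) (i + 1) a)))
      = ∑ k ∈ Finset.range (mm + 1), ∑ j ∈ Finset.range (mm - k),
          ((-1 : ℤ) ^ (k + 1 + (k + 1 + j) * nn)) •
            toC f (μf k (Dg G (nn + 1) (k + 1 + j + 1) a)) := by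
    rw [tri (mm + 1)
      (fun p i => ((-1 : ℤ) ^ (p + 1 + i * nn)) • toC f (μf p (Dg G (nn + 1) (i + 1) a)))]
    exact Finset.sum_congr rfl fun p _ => by rw [show mm + 1 - 1 - p = mm - p from by omega]
  have hB3 : (∑ k ∈ Finset.range (mm + 1), ∑ i ∈ Finset.range k,
        ((-1 : ℤ) ^ (nn + i * nn + (k + 1))) • toC f (μf k (Dg G (nn + 1) i a)))
      = ∑ i ∈ Finset.range (mm + 1), ∑ j ∈ Finset.range (mm - i),
          ((-1 : ℤ) ^ (i + nn + j + i * nn)) • toC f (μf (i + 1 + j) (Dg G (nn + 1) i a)) := by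
    rw [tri (mm + 1)
      (fun i k => ((-1 : ℤ) ^ (nn + i * nn + (k + 1))) • toC f (μf k (Dg G (nn + 1) i a)))]
    refine Finset.sum_congr rfl fun i _ => ?_
    rw [show mm + 1 - 1 - i = mm - i from by omega]
    refine Finset.sum_congr rfl fun j _ => ?_
    rw [show nn + i * nn + (i + 1 + j + 1) = i + nn + j + i * nn + 2 * 1 from by ring,
      neg1pow_shift]
  have hZ1b : (∑ i ∈ Finset.range (mm + 1 + 1), ∑ p ∈ Finset.range (mm + 1),
        ((-1 : ℤ) ^ (nn + i * nn + (p + 1))) • toC f (μf p (Dg G (nn + 1) i a)))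
      = (∑ i ∈ Finset.range (mm + 1), ∑ j ∈ Finset.range (mm - i),
          ((-1 : ℤ) ^ (i + nn + j + i * nn)) • toC f (μf (i + 1 + j) (Dg G (nn + 1) i a)))
        + ((∑ k ∈ Finset.range (mm + 1), ((-1 : ℤ) ^ (k * nn + k + nn + 1)) •
              toC f (ins (nn + 1) k (G (sh k a) * a (k + (nn + 1))) a))
          + ((∑ k ∈ Finset.range (mm + 1), ((-1 : ℤ) ^ (k * nn + k + 1)) •
                toC f (ins (nn + 1) k (a k * G (sh (k + 1) a)) a))
            + (∑ i ∈ Finset.range (mm + 1), ∑ p ∈ Finset.range i,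
                ((-1 : ℤ) ^ (p + 1 + i * nn)) • toC f (μf p (Dg G (nn + 1) (i + 1) a))))) := by
    rw [Finset.sum_comm, Finset.sum_congr rfl key2]
    simp only [Finset.sum_add_distrib]
    rw [hB3, hB1]
  -- the g-cocycle sum
  have key3 : ∀ i ∈ Finset.range (mm + 1),
      ((-1 : ℤ) ^ (i * (nn + 1))) • toC f (ins (nn + 1) i (hochδ (nn + 1) G (sh i a)) a)
      = ((-1 : ℤ) ^ (i * nn + i)) • toC f (ins (nn + 1) i (a i * G (sh (i + 1) a)) a)
        + (∑ q ∈ Finset.range (nn + 1), ((-1 : ℤ) ^ (i + q + 1 + i * nn)) •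
            toC f (ins (nn + 1) i (G (μf q (sh i a))) a))
        + ((-1 : ℤ) ^ (i * nn + i + nn)) •
            toC f (ins (nn + 1) i (G (sh i a) * a (i + (nn + 1))) a) := by
    intro i hi
    have hi' : i ≤ mm := by have := Finset.mem_range.mp hi; omega
    have hrw : ∀ w : A, toC f (ins (nn + 1) i w a) = slotHom a nn f i hi' w := fun w => rfl
    rw [hochδ_apply, hrw, map_add, map_add, map_sum]
    simp only [map_zsmul]
    simp only [slotHom_apply]
    rw [smul_add, smul_add, Finset.smul_sum]
    have e1 : ((-1 : ℤ) ^ (i * (nn + 1))) •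
          toC f (ins (nn + 1) i (sh i a 0 * G (σf (sh i a))) a)
        = ((-1 : ℤ) ^ (i * nn + i)) • toC f (ins (nn + 1) i (a i * G (sh (i + 1) a)) a) := by
      rw [sh_at a i, sh_succ a i, show i * (nn + 1) = i * nn + i from by ring]
    have e2 : (∑ q ∈ Finset.range (nn + 1), ((-1 : ℤ) ^ (i * (nn + 1))) •
          (((-1 : ℤ) ^ (q + 1)) • toC f (ins (nn + 1) i (G (μf q (sh i a))) a)))
        = ∑ q ∈ Finset.range (nn + 1), ((-1 : ℤ) ^ (i + q + 1 + i * nn)) •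
            toC f (ins (nn + 1) i (G (μf q (sh i a))) a) :=
      Finset.sum_congr rfl fun q _ => by
        rw [smul_smul, ← pow_add, show i * (nn + 1) + (q + 1) = i + q + 1 + i * nn from by ring]
    have e3 : ((-1 : ℤ) ^ (i * (nn + 1))) • (((-1 : ℤ) ^ (nn + 1 + 1)) •
          toC f (ins (nn + 1) i (G (sh i a) * sh i a (nn + 1)) a))
        = ((-1 : ℤ) ^ (i * nn + i + nn)) •
            toC f (ins (nn + 1) i (G (sh i a) * a (i + (nn + 1))) a) := by
      rw [show sh i a (nn + 1) = a (i + (nn + 1)) from rfl, smul_smul, ← pow_add,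
        show i * (nn + 1) + (nn + 1 + 1) = i * nn + i + nn + 2 * 1 from by ring, neg1pow_shift]
    rw [e1, e2, e3]
  have hc1 : (∑ k ∈ Finset.range (mm + 1), ((-1 : ℤ) ^ (k * nn + k + 1)) •
        toC f (ins (nn + 1) k (a k * G (sh (k + 1) a)) a))
      + (∑ k ∈ Finset.range (mm + 1), ((-1 : ℤ) ^ (k * nn + k)) •
        toC f (ins (nn + 1) k (a k * G (sh (k + 1) a)) a)) = 0 := by
    rw [← Finset.sum_add_distrib]
    exact Finset.sum_eq_zero fun k _ => cancel_pair (k * nn + k) _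
  have hc2 : (∑ k ∈ Finset.range (mm + 1), ((-1 : ℤ) ^ (k * nn + k + nn + 1)) •
        toC f (ins (nn + 1) k (G (sh k a) * a (k + (nn + 1))) a))
      + (∑ k ∈ Finset.range (mm + 1), ((-1 : ℤ) ^ (k * nn + k + nn)) •
        toC f (ins (nn + 1) k (G (sh k a) * a (k + (nn + 1))) a)) = 0 := by
    rw [← Finset.sum_add_distrib]
    exact Finset.sum_eq_zero fun k _ => cancel_pair (k * nn + k + nn) _
  have hc3 : ((-1 : ℤ) ^ ((mm + 1) * (nn + 1) + nn + 1)) • (toC f a * G (sh (mm + 1) a))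
      + ((-1 : ℤ) ^ ((mm + 1) * (nn + 1) + nn)) • (toC f a * G (sh (mm + 1) a)) = 0 :=
    cancel_pair _ _
  have hc4 : ((-1 : ℤ) ^ (nn + 1)) • (G a * toC f (sh (nn + 1) a))
      + ((-1 : ℤ) ^ nn) • (G a * toC f (sh (nn + 1) a)) = 0 :=
    cancel_pair _ _
  have main : ∀ bA bB1 bB2 bB3 bC xg ws vs wsn vsn xf cf cg : A,
      vsn + vs = 0 → wsn + ws = 0 → xf + cf = 0 → cg + xg = 0 →
      (bA + xg) + (bB3 + (wsn + (vsn + bB1))) + (bC + xf) + (vs + bB2 + ws) + cf + cg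
        = bA + bB1 + bB2 + bB3 + bC := by
    intro bA bB1 bB2 bB3 bC xg ws vs wsn vsn xf cf cg h1 h2 h3 h4
    rw [eq_neg_of_add_eq_zero_left h1, eq_neg_of_add_eq_zero_left h2,
      eq_neg_of_add_eq_zero_left h3, eq_neg_of_add_eq_zero_left h4]
    abel
  rw [hZ1, hZ1a, hZ1b, hZ1c, Finset.sum_congr rfl key3, Finset.sum_add_distrib,
    Finset.sum_add_distrib, blk_def]
  exact main _ _ _ _ _ _ _ _ _ _ _ _ _ hc1 hc2 hc3 hc4

lemma hochδ_zsmul (k : ℕ) (X : (ℕ → A) → A) (c : ℤ) (b : ℕ → A) :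
    hochδ k (fun b => c • X b) b = c • hochδ k X b := by
  simp only [hochδ_apply]
  rw [smul_add, smul_add, Finset.smul_sum]
  congr 1
  congr 1
  · exact mul_smul_comm c (b 0) (X (σf b))
  · exact Finset.sum_congr rfl fun p _ => smul_comm _ _ _
  · rw [smul_mul_assoc]
    exact smul_comm _ _ _

end Main

end CupG

/-- The cup product of Hochschild cocycles is graded commutative up to a coboundary:
if `δf = 0` and `δg = 0` then `f ⌣ g − (−1)^{mn} g ⌣ f = δh` for some
`(m+n−1)`-cochain `h`. -/
theorem cup_graded_commutative_up_to_coboundary (m n : ℕ) (hm : 1 ≤ m) (hn : 1 ≤ n)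
    (f : MultilinearMap R (fun _ : Fin m => A) A)
    (g : MultilinearMap R (fun _ : Fin n => A) A)
    (hf : hochδ m (toC f) = 0) (hg : hochδ n (toC g) = 0) :
    ∃ h : MultilinearMap R (fun _ : Fin (m + n - 1) => A) A,
      cup m n (toC f) (toC g) - ((-1 : ℤ) ^ (m * n)) • cup n m (toC g) (toC f)
        = hochδ (m + n - 1) (toC h) := by
  obtain ⟨mm, rfl⟩ : ∃ mm, m = mm + 1 := ⟨m - 1, by omega⟩
  obtain ⟨nn, rfl⟩ : ∃ nn, n = nn + 1 := ⟨n - 1, by omega⟩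
  have hG : ∀ X Y : ℕ → A, (∀ t, t < nn + 1 → X t = Y t) → toC g X = toC g Y :=
    fun X Y h => CupG.toC_congr g h
  have hmain : ∀ a : ℕ → A,
      hochδ (mm + 1 + nn) (circ (mm + 1) (nn + 1) (toC f) (toC g)) a
        = ((-1 : ℤ) ^ ((mm + 1) * (nn + 1) + nn)) •
            (toC f a * toC g (CupG.sh (mm + 1) a))
          + ((-1 : ℤ) ^ (nn + 1)) • (toC g a * toC f (CupG.sh (nn + 1) a)) := by
    intro a
    have h1 := CupG.lemL nn f (toC g) a hG
    have h2 := CupG.lemR nn f (toC g) a hG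
    rw [← h2] at h1
    rw [hf] at h1
    simp only [Pi.zero_apply, smul_zero, Finset.sum_const_zero, zero_add] at h1
    have hz2 : (∑ i ∈ Finset.range (mm + 1), ((-1 : ℤ) ^ (i * (nn + 1))) •
        toC f (CupG.ins (nn + 1) i (hochδ (nn + 1) (toC g) (CupG.sh i a)) a)) = 0 := by
      refine Finset.sum_eq_zero fun i hi => ?_
      have hi' : i ≤ mm := by have := Finset.mem_range.mp hi; omega
      rw [hg]
      simp only [Pi.zero_apply]
      rw [← CupG.slotHom_apply a nn f i hi', map_zero, smul_zero]
    rw [hz2, zero_add] at h1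
    exact h1
  refine ⟨((-1 : ℤ) ^ ((mm + 1) * (nn + 1) + nn)) • CupG.hcirc g f, ?_⟩
  funext a
  simp only [Pi.sub_apply, Pi.smul_apply]
  show cup (mm + 1) (nn + 1) (toC f) (toC g) a
      - ((-1 : ℤ) ^ ((mm + 1) * (nn + 1))) • cup (nn + 1) (mm + 1) (toC g) (toC f) a
    = hochδ (mm + 1 + nn) (toC (((-1 : ℤ) ^ ((mm + 1) * (nn + 1) + nn)) • CupG.hcirc g f)) a
  rw [show toC (((-1 : ℤ) ^ ((mm + 1) * (nn + 1) + nn)) • CupG.hcirc g f)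
      = fun b => ((-1 : ℤ) ^ ((mm + 1) * (nn + 1) + nn)) • toC (CupG.hcirc g f) b from rfl]
  rw [CupG.hochδ_zsmul, CupG.toC_hcirc, hmain a]
  rw [smul_add, smul_smul, ← pow_add, smul_smul, ← pow_add]
  rw [show (mm + 1) * (nn + 1) + nn + ((mm + 1) * (nn + 1) + nn) =
      0 + 2 * ((mm + 1) * (nn + 1) + nn) from by ring,
    CupG.neg1pow_shift, pow_zero, one_smul]
  rw [show (mm + 1) * (nn + 1) + nn + (nn + 1) = (mm + 1) * (nn + 1) + 1 + 2 * nn from by ring,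
    CupG.neg1pow_shift, pow_succ, mul_neg_one, neg_smul]
  rw [CupG.cup_apply, CupG.cup_apply, sub_eq_add_neg]
end

section
/- Classification of the worked example (minimal C∞-structures on H*(S²∨S²∨S⁵;ℚ) up to isomorphism): for vectors v, w ∈ ℚ², there exist an invertible 2×2 rational matrix A and a nonzero rational number r such that r • v = (det A) • (Aᵀ ·ᵥ w) if and only if (v = 0 ↔ w = 0). Consequently this relation on ℚ² has exactly two equivalence classes: the class {0} and the class of all nonzero vectors. -/
open Matrix

private lemma aux_transitive (v : Fin 2 → ℚ) (hv : v ≠ 0) :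
    ∃ M : Matrix (Fin 2) (Fin 2) ℚ, IsUnit M ∧ M *ᵥ ![1, 0] = v := by
  by_cases h0 : v 0 = 0
  · have h1 : v 1 ≠ 0 := by
      intro h1
      apply hv
      funext i
      fin_cases i <;> simp [h0, h1]
    refine ⟨!![0, 1; v 1, 0], ?_, ?_⟩
    · rw [Matrix.isUnit_iff_isUnit_det]
      simp [Matrix.det_fin_two_of, h1]
    · funext i
      fin_cases i <;> simp [Matrix.mulVec, dotProduct, h0]
  · refine ⟨!![v 0, 0; v 1, 1], ?_, ?_⟩
    · rw [Matrix.isUnit_iff_isUnit_det]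
      simp [Matrix.det_fin_two_of, h0]
    · funext i
      fin_cases i <;> simp [Matrix.mulVec, dotProduct]

/-- Classification of minimal `C∞`-structures on `H*(S²∨S²∨S⁵;ℚ)`: for vectors
`v, w ∈ ℚ²`, there exist an invertible `2×2` rational matrix `A` and a nonzero rational
`r` with `r • v = (det A) • (Aᵀ ·ᵥ w)` if and only if (`v = 0 ↔ w = 0`).  Hence this
relation has exactly two equivalence classes: the zero vector, and all nonzero vectors. -/
theorem two_rational_homotopy_types_classification (v w : Fin 2 → ℚ) :
    (∃ (A : Matrix (Fin 2) (Fin 2) ℚ) (r : ℚ), IsUnit A ∧ r ≠ 0 ∧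
      r • v = A.det • (Aᵀ *ᵥ w)) ↔ (v = 0 ↔ w = 0) := by
  constructor
  · rintro ⟨A, r, hA, hr, heq⟩
    have hdet : A.det ≠ 0 := by
      rw [Matrix.isUnit_iff_isUnit_det, isUnit_iff_ne_zero] at hA
      exact hA
    have hAT : IsUnit Aᵀ := by
      rw [Matrix.isUnit_iff_isUnit_det, Matrix.det_transpose, isUnit_iff_ne_zero]
      exact hdet
    constructor
    · intro hv
      rw [hv, smul_zero] at heq
      have h2 : Aᵀ *ᵥ w = 0 := by
        have := heq.symm
        rwa [smul_eq_zero_iff_right hdet] at this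
      have : Aᵀ⁻¹ *ᵥ (Aᵀ *ᵥ w) = 0 := by rw [h2, Matrix.mulVec_zero]
      rwa [Matrix.mulVec_mulVec, Matrix.nonsing_inv_mul _ ((Matrix.isUnit_iff_isUnit_det _).mp hAT),
        Matrix.one_mulVec] at this
    · intro hw
      rw [hw, Matrix.mulVec_zero, smul_zero, smul_eq_zero_iff_right hr] at heq
      exact heq
  · rintro hiff
    by_cases hv : v = 0
    · have hw : w = 0 := hiff.mp hv
      exact ⟨1, 1, isUnit_one, one_ne_zero, by simp [hv, hw]⟩
    · have hw : w ≠ 0 := fun h => hv (hiff.mpr h)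
      obtain ⟨Mv, hMv, hMve⟩ := aux_transitive v hv
      obtain ⟨Mw, hMw, hMwe⟩ := aux_transitive w hw
      set A : Matrix (Fin 2) (Fin 2) ℚ := (Mv * Mw⁻¹)ᵀ with hAdef
      have hMvdet : Mv.det ≠ 0 := isUnit_iff_ne_zero.mp ((Matrix.isUnit_iff_isUnit_det _).mp hMv)
      have hMwdet : Mw.det ≠ 0 := isUnit_iff_ne_zero.mp ((Matrix.isUnit_iff_isUnit_det _).mp hMw)
      have hAunit : IsUnit A := by
        rw [hAdef, Matrix.isUnit_iff_isUnit_det, Matrix.det_transpose, Matrix.det_mul,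
          Matrix.det_nonsing_inv]
        exact isUnit_iff_ne_zero.mpr (mul_ne_zero hMvdet (by simp [Ring.inverse_eq_inv', hMwdet]))
      have hdetA : A.det ≠ 0 := by
        rw [isUnit_iff_ne_zero.symm, ← Matrix.isUnit_iff_isUnit_det]
        exact hAunit
      refine ⟨A, A.det, hAunit, hdetA, ?_⟩
      have hATw : Aᵀ *ᵥ w = v := by
        rw [hAdef, Matrix.transpose_transpose, ← Matrix.mulVec_mulVec]
        have : Mw⁻¹ *ᵥ w = ![1, 0] := by
          rw [← hMwe, Matrix.mulVec_mulVec,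
            Matrix.nonsing_inv_mul _ ((Matrix.isUnit_iff_isUnit_det _).mp hMw), Matrix.one_mulVec]
        rw [this, hMve]
      rw [hATw]
end
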